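/- arXiv:1203.5186 — 3 statements merged into one kernel-verified Lean document; each statement's English description precedes it below -/
import Mathlib

section
/- Let G be an acyclically edge k-critical graph and uv an edge of G. For any acyclic edge k-coloring φ of G − uv: if C_φ(u) ∩ C_φ(v) = ∅ then d(u) + d(v) ≥ k + 2; and if |C_φ(u) ∩ C_φ(v)| = t, with φ(uu_i) = φ(vv_i) for i = 1,...,t, then Σ_{i=1}^t d(v_i) + d(u) + d(v) ≥ k + t + 2 and Σ_{i=1}^t d(u_i) + d(u) + d(v) ≥ k + t + 2. -/
/-!
If a colour `c` is missing at both `u` and `v` in `G - uv`, colouring `uv` with `c` gives a proper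
colouring of `G`, which by criticality has a bichromatic cycle. That cycle passes through `uv`, so
it leaves `v` along an edge `vy` whose colour is common to `u` and `v`, and `c` appears at `y`.
Hence every colour missing at both ends appears at some `v_i` (and, symmetrically, at some `u_i`)
on an edge other than `v v_i`, and counting colours gives
`k ≤ (d(u) - 1) + (d(v) - 1) - t + Σ (d(v_i) - 1)`.
-/

open SimpleGraph Finset

universe u

variable {V : Type u}

/-- A proper edge coloring with `k` colors: distinct edges sharing a vertex get
different colors. -/
def ProperEC (G : SimpleGraph V) {k : ℕ} (φ : Sym2 V → Fin k) : Prop :=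
  ∀ e₁ ∈ G.edgeSet, ∀ e₂ ∈ G.edgeSet, e₁ ≠ e₂ → (∃ x, x ∈ e₁ ∧ x ∈ e₂) → φ e₁ ≠ φ e₂

/-- An acyclic edge coloring: proper, and no cycle of `G` uses only two colors. -/
def AcyclicEC (G : SimpleGraph V) {k : ℕ} (φ : Sym2 V → Fin k) : Prop :=
  ProperEC G φ ∧
    ∀ (v : V) (w : G.Walk v v), w.IsCycle → 2 < (w.edges.map φ).toFinset.card

/-- `G` has an acyclic edge coloring with `k` colors, i.e. `χ'_a(G) ≤ k`. -/
def HasAEC (G : SimpleGraph V) (k : ℕ) : Prop :=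
  ∃ φ : Sym2 V → Fin k, AcyclicEC G φ

/-- `G` is acyclically edge `k`-critical: `χ'_a(G) > k` but every proper subgraph
admits an acyclic edge `k`-coloring. -/
def AcyclicallyEdgeCritical (G : SimpleGraph V) (k : ℕ) : Prop :=
  ¬ HasAEC G k ∧ ∀ H : SimpleGraph V, H ≤ G → H ≠ G → HasAEC H k

/-- `C_φ(v)`: the set of colors appearing on edges incident with `v`. -/
def Cset (G : SimpleGraph V) {k : ℕ} (φ : Sym2 V → Fin k) (v : V) : Set (Fin k) :=
  {c | ∃ u, G.Adj v u ∧ φ s(v, u) = c}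

lemma SimpleGraph.Walk.IsCycle.exists_mem_edges_ne {G : SimpleGraph V} {r : V} {w : G.Walk r r}
    (hw : w.IsCycle) {a b : V} (hab : s(a, b) ∈ w.edges) :
    ∃ x, x ≠ b ∧ s(a, x) ∈ w.edges := by
  have htwo := hw.ncard_neighborSet_toSubgraph_eq_two (w.fst_mem_support_of_mem_edges hab)
  obtain ⟨x, hx, hxb⟩ :=
    Set.exists_ne_of_one_lt_ncard (s := w.toSubgraph.neighborSet a) (by omega) b
  exact ⟨x, hxb, Walk.adj_toSubgraph_iff_mem_edges.mp hx⟩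

lemma ProperEC.apply_ne {G : SimpleGraph V} {k : ℕ} {φ : Sym2 V → Fin k} (hφ : ProperEC G φ)
    {a x y : V} (hx : G.Adj a x) (hy : G.Adj a y) (hxy : x ≠ y) : φ s(a, x) ≠ φ s(a, y) :=
  hφ _ hx _ hy (fun h => hxy (Sym2.congr_right.mp h))
    ⟨a, Sym2.mem_mk_left _ _, Sym2.mem_mk_left _ _⟩

lemma ProperEC.exists_mem_edges_apply_eq {G : SimpleGraph V} {k : ℕ} {φ : Sym2 V → Fin k}
    (hφ : ProperEC G φ) {r : V} {w : G.Walk r r} (hw : w.IsCycle)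
    (hcard : (w.edges.map φ).toFinset.card ≤ 2) {a b : V} (hab : s(a, b) ∈ w.edges)
    {c : Fin k} (hc : c ∈ w.edges.map φ) (hcb : c ≠ φ s(a, b)) :
    ∃ x, s(a, x) ∈ w.edges ∧ φ s(a, x) = c := by
  obtain ⟨x, hxb, hax⟩ := hw.exists_mem_edges_ne hab
  refine ⟨x, hax, ?_⟩
  by_contra hxc
  have hxb' := hφ.apply_ne (w.adj_of_mem_edges hax) (w.adj_of_mem_edges hab) hxb
  have hmem : ∀ e ∈ w.edges, φ e ∈ (w.edges.map φ).toFinset := fun e he =>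
    List.mem_toFinset.mpr (List.mem_map_of_mem he)
  have := Finset.two_lt_card.mpr ⟨_, hmem _ hab, _, hmem _ hax, c, List.mem_toFinset.mpr hc,
    hxb'.symm, hcb.symm, hxc⟩
  omega

lemma ncard_Cset_le_degree [Fintype V] (H : SimpleGraph V) [DecidableRel H.Adj] {k : ℕ}
    (φ : Sym2 V → Fin k) (x : V) : (Cset H φ x).ncard ≤ H.degree x := by
  have himage : Cset H φ x = (fun y => φ s(x, y)) '' H.neighborSet x := by
    ext c; simp [Cset]
  rw [himage, ← card_neighborSet_eq_degree, ← Nat.card_eq_fintype_card, Nat.card_coe_set_eq]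
  exact Set.ncard_image_le (Set.toFinite _)

lemma degree_lt_degree_of_not_adj [Fintype V] {G H : SimpleGraph V} [DecidableRel G.Adj]
    [DecidableRel H.Adj] (hHG : H ≤ G) {u v : V} (huv : G.Adj u v) (hnot : ¬ H.Adj u v) :
    H.degree u < G.degree u := by
  rw [← card_neighborFinset_eq_degree, ← card_neighborFinset_eq_degree]
  refine Finset.card_lt_card ⟨fun x hx => ?_, fun hsub => hnot ?_⟩
  · simpa using hHG ((mem_neighborFinset _ _ _).mp hx)
  · simpa using hsub ((mem_neighborFinset _ _ _).mpr huv)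

section Extension

variable {G : SimpleGraph V} {k : ℕ} {u v : V} {φ : Sym2 V → Fin k} {c : Fin k}

lemma mem_edgeSet_deleteEdges_of_ne {e : Sym2 V} (he : e ∈ G.edgeSet) (hne : e ≠ s(u, v)) :
    e ∈ (G.deleteEdges {s(u, v)}).edgeSet := by
  simp [edgeSet_deleteEdges, he, hne]

lemma ProperEC.update_of_notMem_Cset [DecidableEq V]
    (hφ : ProperEC (G.deleteEdges {s(u, v)}) φ)
    (hcu : c ∉ Cset (G.deleteEdges {s(u, v)}) φ u)
    (hcv : c ∉ Cset (G.deleteEdges {s(u, v)}) φ v) :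
    ProperEC G (Function.update φ s(u, v) c) := by
  have hmissing : ∀ e ∈ G.edgeSet, e ≠ s(u, v) → ∀ x ∈ e, x ∈ s(u, v) → φ e ≠ c := by
    intro e he hne x hxe hxuv hec
    obtain ⟨y, rfl⟩ := Sym2.mem_iff_exists.mp hxe
    have hxy : (G.deleteEdges {s(u, v)}).Adj x y := mem_edgeSet_deleteEdges_of_ne he hne
    rcases Sym2.mem_iff.mp hxuv with rfl | rfl
    · exact hcu ⟨y, hxy, hec⟩
    · exact hcv ⟨y, hxy, hec⟩
  intro e₁ he₁ e₂ he₂ hne ⟨x, hx₁, hx₂⟩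
  by_cases h₁ : e₁ = s(u, v) <;> by_cases h₂ : e₂ = s(u, v)
  · exact absurd (h₁.trans h₂.symm) hne
  · subst h₁
    rw [Function.update_self, Function.update_of_ne h₂]
    exact (hmissing e₂ he₂ h₂ x hx₂ hx₁).symm
  · subst h₂
    rw [Function.update_self, Function.update_of_ne h₁]
    exact hmissing e₁ he₁ h₁ x hx₁ hx₂
  · rw [Function.update_of_ne h₁, Function.update_of_ne h₂]
    exact hφ _ (mem_edgeSet_deleteEdges_of_ne he₁ h₁) _ (mem_edgeSet_deleteEdges_of_ne he₂ h₂)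
      hne ⟨x, hx₁, hx₂⟩

lemma exists_adj_apply_mem_Cset_of_notMem (hG : ¬ HasAEC G k)
    (hφ : AcyclicEC (G.deleteEdges {s(u, v)}) φ)
    (hcu : c ∉ Cset (G.deleteEdges {s(u, v)}) φ u)
    (hcv : c ∉ Cset (G.deleteEdges {s(u, v)}) φ v) :
    ∃ y, (G.deleteEdges {s(u, v)}).Adj v y ∧
      φ s(v, y) ∈ Cset (G.deleteEdges {s(u, v)}) φ u ∧ c ∈ Cset (G.deleteEdges {s(u, v)}) φ y := by
  classical
  set H := G.deleteEdges {s(u, v)}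
  set ψ := Function.update φ s(u, v) c
  have hψ : ProperEC G ψ := hφ.1.update_of_notMem_Cset hcu hcv
  have hψ_uv : ψ s(u, v) = c := Function.update_self _ _ _
  have hψ_ne : ∀ e, e ≠ s(u, v) → ψ e = φ e := fun e he => Function.update_of_ne he _ _
  obtain ⟨r, w, hw, hcard⟩ :
      ∃ (r : V) (w : G.Walk r r), w.IsCycle ∧ (w.edges.map ψ).toFinset.card ≤ 2 := by
    by_contra! h
    exact hG ⟨ψ, hψ, h⟩
  have huvw : s(u, v) ∈ w.edges := by
    by_contra huvw
    have hne : ∀ e ∈ w.edges, e ≠ s(u, v) := fun e he h => huvw (h ▸ he)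
    have hsub : ∀ e ∈ w.edges, e ∈ H.edgeSet := fun e he =>
      mem_edgeSet_deleteEdges_of_ne (w.edges_subset_edgeSet he) (hne e he)
    have h2 := hφ.2 r (w.transfer H hsub) (hw.transfer hsub)
    rw [Walk.edges_transfer, List.map_congr_left fun e he => (hψ_ne e (hne e he)).symm]
      at h2
    omega
  have hc : c ∈ w.edges.map ψ := hψ_uv ▸ List.mem_map_of_mem huvw
  obtain ⟨y, hyu, hvy⟩ := hw.exists_mem_edges_ne (Sym2.eq_swap ▸ huvw : s(v, u) ∈ w.edges)
  have hGvy := w.adj_of_mem_edges hvy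
  have hy : y ∉ s(u, v) := by
    rw [Sym2.mem_iff, not_or]
    exact ⟨hyu, hGvy.ne'⟩
  have hHvy : H.Adj v y :=
    mem_edgeSet_deleteEdges_of_ne hGvy fun h => hy (h ▸ Sym2.mem_mk_right v y)
  have hvy_color : ψ s(v, y) = φ s(v, y) := hψ_ne _ fun h => hy (h ▸ Sym2.mem_mk_right v y)
  have hvy_ne_c : ψ s(v, y) ≠ c := hvy_color ▸ fun h => hcv ⟨y, hHvy, h⟩
  -- the cycle is coloured `c, φ(vy)` alternately; follow it one step from `u` and from `y`
  obtain ⟨x, hux, hx⟩ := hψ.exists_mem_edges_apply_eq hw hcard huvw (List.mem_map_of_mem hvy)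
    (hψ_uv ▸ hvy_ne_c)
  have hux_ne : s(u, x) ≠ s(u, v) := fun h => hvy_ne_c (by rw [← hx, h, hψ_uv])
  have hHux : H.Adj u x := mem_edgeSet_deleteEdges_of_ne (w.edges_subset_edgeSet hux) hux_ne
  obtain ⟨z, hyz, hz⟩ := hψ.exists_mem_edges_apply_eq hw hcard
    (Sym2.eq_swap ▸ hvy : s(y, v) ∈ w.edges) hc (by rw [Sym2.eq_swap]; exact hvy_ne_c.symm)
  have hyz_ne : s(y, z) ≠ s(u, v) := fun h => hy (h ▸ Sym2.mem_mk_left y z)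
  have hHyz : H.Adj y z := mem_edgeSet_deleteEdges_of_ne (w.edges_subset_edgeSet hyz) hyz_ne
  refine ⟨y, hHvy, ⟨x, hHux, ?_⟩, ⟨z, hHyz, ?_⟩⟩
  · rw [← hvy_color, ← hx, hψ_ne _ hux_ne]
  · rw [← hψ_ne _ hyz_ne, hz]

end Extension

lemma add_ncard_inter_add_le_sum_degree [Fintype V] (H : SimpleGraph V) [DecidableRel H.Adj]
    {k t : ℕ} (φ : Sym2 V → Fin k) {u v : V} (w : Fin t → V) (hw : ∀ i, H.Adj v (w i))
    (hmissing : ∀ c, c ∉ Cset H φ u → c ∉ Cset H φ v → ∃ i, c ∈ Cset H φ (w i)) :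
    k + (Cset H φ u ∩ Cset H φ v).ncard + t ≤
      ∑ i, H.degree (w i) + H.degree u + H.degree v := by
  set C := Cset H φ
  have hwv : ∀ i, φ s(v, w i) ∈ C (w i) := fun i => ⟨v, (hw i).symm, by rw [Sym2.eq_swap]⟩
  have hk : (C u ∪ C v).ncard + (C u ∪ C v)ᶜ.ncard = k := by
    rw [Set.ncard_add_ncard_compl, Nat.card_eq_fintype_card, Fintype.card_fin]
  have hunion : (C u ∪ C v).ncard + (C u ∩ C v).ncard = (C u).ncard + (C v).ncard :=
    Set.ncard_union_add_ncard_inter _ _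
  have hcover : (C u ∪ C v)ᶜ ⊆ ⋃ i ∈ Finset.univ, C (w i) \ {φ s(v, w i)} := by
    intro c hc
    rw [Set.mem_compl_iff, Set.mem_union, not_or] at hc
    obtain ⟨i, hi⟩ := hmissing c hc.1 hc.2
    refine Set.mem_biUnion (Finset.mem_coe.mpr (Finset.mem_univ i)) ⟨hi, ?_⟩
    rintro rfl
    exact hc.2 ⟨w i, hw i, rfl⟩
  have hmissing_card : (C u ∪ C v)ᶜ.ncard + t ≤ ∑ i, H.degree (w i) := calc
    (C u ∪ C v)ᶜ.ncard + t ≤ ∑ i, ((C (w i) \ {φ s(v, w i)}).ncard + 1) := by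
      rw [Finset.sum_add_distrib, Finset.sum_const, Finset.card_univ, Fintype.card_fin,
        smul_eq_mul, mul_one]
      exact Nat.add_le_add_right ((Set.ncard_le_ncard hcover).trans
        (Finset.set_ncard_biUnion_le _ _)) t
    _ = ∑ i, (C (w i)).ncard := by
      simp only [Set.ncard_sdiff_singleton_add_one (hwv _)]
    _ ≤ ∑ i, H.degree (w i) := Finset.sum_le_sum fun i _ => ncard_Cset_le_degree H φ (w i)
  have hu : (C u).ncard ≤ _ := ncard_Cset_le_degree H φ u
  have hv : (C v).ncard ≤ _ := ncard_Cset_le_degree H φ v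
  omega

lemma ProperEC.range_apply_eq_of_ncard_eq {H : SimpleGraph V} {k t : ℕ} {φ : Sym2 V → Fin k}
    (hφ : ProperEC H φ) {v : V} {w : Fin t → V} (hinj : Function.Injective w)
    (hw : ∀ i, H.Adj v (w i)) {S : Set (Fin k)} (hS : S.ncard = t)
    (hsub : ∀ i, φ s(v, w i) ∈ S) : Set.range (fun i => φ s(v, w i)) = S := by
  have hinj' : Function.Injective fun i => φ s(v, w i) := fun i j hij => by
    by_contra hne
    exact hφ.apply_ne (hw i) (hw j) (hinj.ne hne) hij
  refine Set.eq_of_subset_of_ncard_le (Set.range_subset_iff.mpr hsub) ?_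
  rw [Set.ncard_range_of_injective hinj', Nat.card_eq_fintype_card, Fintype.card_fin, hS]

lemma add_ncard_inter_add_two_le_sum_degree [Fintype V] {G : SimpleGraph V}
    [DecidableRel G.Adj] {k t : ℕ} (hG : ¬ HasAEC G k) {u v : V} (huv : G.Adj u v)
    {φ : Sym2 V → Fin k} (hφ : AcyclicEC (G.deleteEdges {s(u, v)}) φ) (w : Fin t → V)
    (hw : ∀ i, (G.deleteEdges {s(u, v)}).Adj v (w i))
    (hcommon : ∀ c ∈ Cset (G.deleteEdges {s(u, v)}) φ u ∩ Cset (G.deleteEdges {s(u, v)}) φ v,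
      ∃ i, φ s(v, w i) = c) :
    k + (Cset (G.deleteEdges {s(u, v)}) φ u ∩ Cset (G.deleteEdges {s(u, v)}) φ v).ncard
      + t + 2 ≤ ∑ i, G.degree (w i) + G.degree u + G.degree v := by
  classical
  set H := G.deleteEdges {s(u, v)}
  have hmissing : ∀ c, c ∉ Cset H φ u → c ∉ Cset H φ v → ∃ i, c ∈ Cset H φ (w i) := by
    intro c hcu hcv
    obtain ⟨y, hvy, hyu, hcy⟩ := exists_adj_apply_mem_Cset_of_notMem hG hφ hcu hcv
    obtain ⟨i, hi⟩ := hcommon _ ⟨hyu, y, hvy, rfl⟩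
    obtain rfl : w i = y := by
      by_contra hne
      exact hφ.1.apply_ne (hw i) hvy hne hi
    exact ⟨i, hcy⟩
  have hHG : H ≤ G := deleteEdges_le _
  have hnot : ¬ H.Adj u v := by simp [H]
  have hu := degree_lt_degree_of_not_adj hHG huv hnot
  have hv := degree_lt_degree_of_not_adj hHG huv.symm fun h => hnot h.symm
  have hsum : ∑ i, H.degree (w i) ≤ ∑ i, G.degree (w i) :=
    Finset.sum_le_sum fun i _ => degree_le_of_le hHG
  have := add_ncard_inter_add_le_sum_degree H φ w hw hmissing
  omega

theorem critical_degree_sum_fact_general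
    {V : Type u} [Fintype V] (G : SimpleGraph V)
    [DecidableRel G.Adj] (k : ℕ)
    (hG : AcyclicallyEdgeCritical G k) {u v : V} (huv : G.Adj u v)
    (φ : Sym2 V → Fin k)
    (hφ : AcyclicEC (G.deleteEdges {s(u, v)}) φ) :
    (Cset (G.deleteEdges {s(u, v)}) φ u ∩ Cset (G.deleteEdges {s(u, v)}) φ v = ∅ →
      k + 2 ≤ G.degree u + G.degree v) ∧
    ∀ (t : ℕ) (ui vi : Fin t → V),
      Function.Injective ui → Function.Injective vi →
      (∀ i, (G.deleteEdges {s(u, v)}).Adj u (ui i)) →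
      (∀ i, (G.deleteEdges {s(u, v)}).Adj v (vi i)) →
      (∀ i, φ s(u, ui i) = φ s(v, vi i)) →
      (Cset (G.deleteEdges {s(u, v)}) φ u ∩ Cset (G.deleteEdges {s(u, v)}) φ v).ncard = t →
      k + t + 2 ≤ (∑ i, G.degree (vi i)) + G.degree u + G.degree v ∧
      k + t + 2 ≤ (∑ i, G.degree (ui i)) + G.degree u + G.degree v := by
  have hswap : G.deleteEdges {s(v, u)} = G.deleteEdges {s(u, v)} := by rw [Sym2.eq_swap]
  refine ⟨fun hempty => ?_, fun t ui vi _ hvi huia hvia hcol hcard => ?_⟩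
  · have := add_ncard_inter_add_two_le_sum_degree hG.1 huv hφ Fin.elim0 (fun i => i.elim0)
      fun c hc => (hempty ▸ hc : c ∈ (∅ : Set (Fin k))).elim
    simp only [Finset.univ_eq_empty, Finset.sum_empty] at this
    omega
  · have hrange := hφ.1.range_apply_eq_of_ncard_eq hvi hvia hcard
      fun i => ⟨⟨ui i, huia i, hcol i⟩, vi i, hvia i, rfl⟩
    have hv := add_ncard_inter_add_two_le_sum_degree hG.1 huv hφ vi hvia fun c hc => by
      rwa [← hrange] at hc
    have hu := add_ncard_inter_add_two_le_sum_degree hG.1 huv.symm (hswap ▸ hφ) ui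
      (hswap ▸ huia) fun c hc => by
        rw [hswap, Set.inter_comm, ← hrange] at hc
        obtain ⟨i, rfl⟩ := hc
        exact ⟨i, hcol i⟩
    omega

/-- Fact 2 on degree sums for critical graphs: for an edge `uv` of an acyclically
edge `k`-critical graph `G` and any acyclic edge `k`-coloring `φ` of `G - uv`:
if `C_φ(u) ∩ C_φ(v) = ∅` then `d(u) + d(v) ≥ k + 2`; and if the intersection has
size `t`, realized by distinct neighbors `u_i` of `u` and `v_i` of `v` with
`φ(uu_i) = φ(vv_i)`, then `Σ d(v_i) + d(u) + d(v) ≥ k + t + 2` and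
`Σ d(u_i) + d(u) + d(v) ≥ k + t + 2`. -/
theorem critical_degree_sum_fact
    {V : Type u} [Fintype V] [DecidableEq V] (G : SimpleGraph V)
    [DecidableRel G.Adj] (k : ℕ)
    (hG : AcyclicallyEdgeCritical G k) {u v : V} (huv : G.Adj u v)
    (φ : Sym2 V → Fin k)
    (hφ : AcyclicEC (G.deleteEdges {s(u, v)}) φ) :
    (Cset (G.deleteEdges {s(u, v)}) φ u ∩ Cset (G.deleteEdges {s(u, v)}) φ v = ∅ →
      k + 2 ≤ G.degree u + G.degree v) ∧
    ∀ (t : ℕ) (ui vi : Fin t → V),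
      Function.Injective ui → Function.Injective vi →
      (∀ i, (G.deleteEdges {s(u, v)}).Adj u (ui i)) →
      (∀ i, (G.deleteEdges {s(u, v)}).Adj v (vi i)) →
      (∀ i, φ s(u, ui i) = φ s(v, vi i)) →
      (Cset (G.deleteEdges {s(u, v)}) φ u ∩ Cset (G.deleteEdges {s(u, v)}) φ v).ncard = t →
      k + t + 2 ≤ (∑ i, G.degree (vi i)) + G.degree u + G.degree v ∧
      k + t + 2 ≤ (∑ i, G.degree (ui i)) + G.degree u + G.degree v :=
  critical_degree_sum_fact_general G k hG huv φ hφ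
end

section
/- Let G be an acyclically edge k-critical graph with k ≥ Δ(G)+2 and let v be a vertex of degree 3 in G. Then every neighbor of v has degree at least k − Δ(G) + 2. -/
/-!
Suppose a neighbour `u` of the degree-3 vertex `v` had degree at most `k - Δ + 1`. Let `x`, `y` be
the other neighbours of `v` and take an acyclic colouring of `H = G - uv`, with colours `a`, `b` on
`vx`, `vy`; at most `k - Δ` colours occur at `u`. A colour `α` missing at `u` and `v` cannot be put
on `uv` only because of a bichromatic `(c, α)`-path from `u` to `v`, where `c ∈ {a, b}` occurs at
`u`. A bichromatic subgraph of a proper colouring has maximum degree two, so an `(a, α)`-path from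
`u`, entering `v` through `x`, forces `α` to occur at `x`.
* If neither `a` nor `b` occurs at `u`, no such path exists.
* If both occur, at least `Δ` colours miss `u`; one of them, `β`, misses `x` and is forced onto `y`.
  Recolouring `vx` with `β` leaves a colour missing at `u` and `y` that nothing blocks.
* If only `a` occurs, every colour missing at `u` other than `b` is forced onto `x` and onto the
  `a`-neighbour of `u`, which pins down their colour sets. Recolouring `vx` with another colour
  `β` of `u`, and separately the `a`-edge at `u` with `b`, gives `(β, α)`-paths from `u` to both
  `x` and `y`; but `u`, `x`, `y` would then be three ends of one path.
-/

open SimpleGraph Finset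

universe u

variable {V : Type u}

section Counting

variable {α : Type*}

lemma exists_forall_eq_or_eq_of_card_le_two [DecidableEq α] {T : Finset α} {a : α} (ha : a ∈ T)
    (hT : T.card ≤ 2) : ∃ b, ∀ t ∈ T, t = b ∨ t = a := by
  have : Nonempty α := ⟨a⟩
  obtain ⟨b, hb⟩ := Finset.card_le_one_iff_subset_singleton.mp
    (by rw [Finset.card_erase_of_mem ha]; omega : (T.erase a).card ≤ 1)
  refine ⟨b, fun t ht => or_iff_not_imp_right.mpr fun hta => ?_⟩
  exact Finset.mem_singleton.mp (hb (Finset.mem_erase.mpr ⟨hta, ht⟩))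

variable [Finite α] {S T C : Set α} {a : α}

lemma exists_mem_notMem_of_ncard_le (haS : a ∉ S) (haC : a ∈ C) (h : C.ncard ≤ S.ncard) :
    ∃ b ∈ S, b ∉ C := by
  by_contra! hSC
  have := Set.ncard_le_ncard (Set.insert_subset haC hSC)
  rw [Set.ncard_insert_of_notMem haS] at this
  omega

lemma eq_insert_compl_of_ncard_le (haT : a ∈ T) (hsub : Tᶜ ⊆ C) (haC : a ∈ C)
    (hcard : C.ncard + T.ncard ≤ Nat.card α + 1) : C = insert a Tᶜ := by
  refine (Set.eq_of_subset_of_ncard_le (Set.insert_subset haC hsub) ?_).symm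
  have := Set.ncard_add_ncard_compl T
  rw [Set.ncard_insert_of_notMem (Set.notMem_compl_iff.mpr haT)]
  omega

end Counting

section Paths

variable {B B' : SimpleGraph V} {p q q₁ q₂ v z : V}

lemma SimpleGraph.Reachable.exists_adj_of_ne (h : B.Reachable p q) (hne : p ≠ q) :
    ∃ z, B.Adj p z := by
  obtain ⟨w⟩ := h
  cases w with
  | nil => exact absurd rfl hne
  | cons h _ => exact ⟨_, h⟩

/-- In a graph of maximum degree two a path entered from `s'` is forced step by step. -/
lemma eq_of_isPath_of_subsingleton
    (hB : ∀ z w₁ w₂ w₃, B.Adj z w₁ → B.Adj z w₂ → B.Adj z w₃ → w₁ = w₂ ∨ w₁ = w₃ ∨ w₂ = w₃)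
    {s s' : V} (P : B.Walk s q₁) (Q : B.Walk s q₂)
    (hP : P.IsPath) (hQ : Q.IsPath) (hs : B.Adj s s') (hsP : s' ∉ P.support)
    (hsQ : s' ∉ Q.support) (h₁ : (B.neighborSet q₁).Subsingleton)
    (h₂ : (B.neighborSet q₂).Subsingleton) : q₁ = q₂ := by
  induction P generalizing s' with
  | nil =>
    cases Q with
    | nil => rfl
    | cons h Q =>
      simp only [Walk.support_cons, List.mem_cons, not_or] at hsQ
      exact absurd (by rw [h₁ hs h]; exact Q.start_mem_support) hsQ.2
  | cons h P ih =>
    cases Q with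
    | nil =>
      simp only [Walk.support_cons, List.mem_cons, not_or] at hsP
      exact absurd (by rw [h₂ hs h]; exact P.start_mem_support) hsP.2
    | cons h' Q =>
      simp only [Walk.support_cons, List.mem_cons, not_or] at hsP hsQ
      rw [Walk.cons_isPath_iff] at hP hQ
      have hP' : s' ≠ _ := fun h => hsP.2 (h ▸ P.start_mem_support)
      have hQ' : s' ≠ _ := fun h => hsQ.2 (h ▸ Q.start_mem_support)
      obtain rfl := ((hB _ _ _ _ hs h h').resolve_left hP').resolve_left hQ'
      exact ih Q hP.1 hQ.1 h.symm hP.2 hQ.2 h₁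

lemma eq_of_reachable_of_subsingleton
    (hB : ∀ z w₁ w₂ w₃, B.Adj z w₁ → B.Adj z w₂ → B.Adj z w₃ → w₁ = w₂ ∨ w₁ = w₃ ∨ w₂ = w₃)
    (hp : (B.neighborSet p).Subsingleton) (h₁ : (B.neighborSet q₁).Subsingleton)
    (h₂ : (B.neighborSet q₂).Subsingleton) (hpq₁ : p ≠ q₁) (hpq₂ : p ≠ q₂)
    (hr₁ : B.Reachable p q₁) (hr₂ : B.Reachable p q₂) : q₁ = q₂ := by
  obtain ⟨P, hP⟩ := hr₁.exists_isPath
  obtain ⟨Q, hQ⟩ := hr₂.exists_isPath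
  cases P with
  | nil => exact absurd rfl hpq₁
  | cons h P =>
    cases Q with
    | nil => exact absurd rfl hpq₂
    | cons h' Q =>
      obtain rfl := hp h h'
      rw [Walk.cons_isPath_iff] at hP hQ
      exact eq_of_isPath_of_subsingleton hB P Q hP.1 hQ.1 h.symm hP.2 hQ.2 h₁ h₂

lemma SimpleGraph.Reachable.of_forall_adj_eq (h : B'.Reachable p v) (hpv : p ≠ v)
    (hv : ∀ t, B'.Adj v t → t = z) (hB : ∀ a b, B'.Adj a b → a ≠ v → b ≠ v → B.Adj a b) :
    B.Reachable p z := by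
  obtain ⟨P, hP⟩ := h.symm.exists_isPath
  cases P with
  | nil => exact absurd rfl hpv
  | cons h Q =>
    obtain rfl := hv _ h
    rw [Walk.cons_isPath_iff] at hP
    have hQ : ∀ e ∈ Q.edges, e ∈ B.edgeSet := by
      intro e he
      induction e using Sym2.ind with
      | _ a b =>
        exact hB a b (Q.adj_of_mem_edges he)
          (fun h => hP.2 (h ▸ Q.fst_mem_support_of_mem_edges he))
          (fun h => hP.2 (h ▸ Q.snd_mem_support_of_mem_edges he))
    exact (Q.transfer B hQ).reachable.symm

end Paths

section Colourings

variable {k : ℕ} {H H' : SimpleGraph V} {φ : Sym2 V → Fin k} {c d κ : Fin k} {p q w z : V}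

def bichromatic (H : SimpleGraph V) (φ : Sym2 V → Fin k) (c d : Fin k) : SimpleGraph V where
  Adj p q := H.Adj p q ∧ (φ s(p, q) = c ∨ φ s(p, q) = d)
  symm := ⟨fun _ _ h => ⟨h.1.symm, by rw [Sym2.eq_swap]; exact h.2⟩⟩
  loopless := ⟨fun _ h => h.1.ne rfl⟩

@[simp]
lemma bichromatic_adj :
    (bichromatic H φ c d).Adj p q ↔ H.Adj p q ∧ (φ s(p, q) = c ∨ φ s(p, q) = d) :=
  Iff.rfl

lemma bichromatic_comm : bichromatic H φ c d = bichromatic H φ d c := by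
  ext; simp [or_comm]

lemma bichromatic_mono (h : H' ≤ H) : bichromatic H' φ c d ≤ bichromatic H φ c d :=
  fun _ _ hpq => ⟨h hpq.1, hpq.2⟩

lemma bichromatic_update_le [DecidableEq V] {e : Sym2 V} (hc : κ ≠ c) (hd : κ ≠ d) :
    bichromatic H (Function.update φ e κ) c d ≤ bichromatic H φ c d := by
  rintro p q ⟨hpq, hcol⟩
  by_cases he : s(p, q) = e
  · simp [he, hc, hd] at hcol
  · exact ⟨hpq, by rwa [Function.update_of_ne he] at hcol⟩

lemma Cset_mono (h : H' ≤ H) : Cset H' φ p ⊆ Cset H φ p :=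
  fun _ ⟨z, hz, hc⟩ => ⟨z, h hz, hc⟩

lemma mem_Cset_of_mem_edgeSet {e : Sym2 V} (he : e ∈ H.edgeSet) (hp : p ∈ e) :
    φ e ∈ Cset H φ p := by
  refine ⟨Sym2.Mem.other hp, ?_, by rw [Sym2.other_spec]⟩
  rwa [← H.mem_edgeSet, Sym2.other_spec]

lemma mem_Cset_of_adj (h : H.Adj p q) : φ s(p, q) ∈ Cset H φ q :=
  ⟨p, h.symm, by rw [Sym2.eq_swap]⟩

lemma ncard_Cset_le [Finite V] : (Cset H φ p).ncard ≤ (H.neighborSet p).ncard :=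
  Set.ncard_image_le (f := fun z => φ s(p, z))

lemma update_mk_of_notMem [DecidableEq V] {e : Sym2 V} (hp : p ∉ e) :
    Function.update φ e κ s(p, q) = φ s(p, q) :=
  Function.update_of_ne (fun h : s(p, q) = e => hp (h ▸ Sym2.mem_mk_left p q)) _ _

lemma Cset_update_of_notMem [DecidableEq V] {e : Sym2 V} (hp : p ∉ e) :
    Cset H (Function.update φ e κ) p = Cset H φ p := by
  ext c
  refine exists_congr fun z => and_congr_right fun _ => ?_
  rw [update_mk_of_notMem hp]

lemma ProperEC.anti (hφ : ProperEC H φ) (h : H' ≤ H) : ProperEC H' φ :=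
  fun e₁ h₁ e₂ h₂ => hφ e₁ (edgeSet_mono h h₁) e₂ (edgeSet_mono h h₂)

lemma ProperEC.eq_of_color_eq (hφ : ProperEC H φ) (h₁ : H.Adj w z) (h₂ : H.Adj w p)
    (hc : φ s(w, z) = φ s(w, p)) : z = p := by
  by_contra hne
  refine hφ _ h₁ _ h₂ ?_ ⟨w, Sym2.mem_mk_left _ _, Sym2.mem_mk_left _ _⟩ hc
  exact mt Sym2.congr_right.mp hne

lemma ProperEC.color_notMem_Cset_deleteEdges (hφ : ProperEC H φ) (hpq : H.Adj p q) :
    φ s(p, q) ∉ Cset (H.deleteEdges {s(p, q)}) φ p := by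
  rintro ⟨z, hz, hc⟩
  rw [deleteEdges_adj] at hz
  exact hz.2 (by rw [hφ.eq_of_color_eq hz.1 hpq hc]; rfl)

lemma ProperEC.Cset_update [DecidableEq V] (hφ : ProperEC H φ) (hpq : H.Adj p q) :
    Cset H (Function.update φ s(p, q) κ) p = insert κ (Cset H φ p \ {φ s(p, q)}) := by
  ext c
  constructor
  · rintro ⟨z, hz, rfl⟩
    by_cases hzq : z = q
    · simp [hzq]
    · rw [Function.update_of_ne (mt Sym2.congr_right.mp hzq)]
      exact Or.inr ⟨⟨z, hz, rfl⟩, fun h => hzq (hφ.eq_of_color_eq hz hpq h)⟩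
  · rintro (rfl | ⟨⟨z, hz, rfl⟩, hne⟩)
    · exact ⟨q, hpq, by simp⟩
    · have hzq : z ≠ q := by rintro rfl; exact hne rfl
      exact ⟨z, hz, by rw [Function.update_of_ne (mt Sym2.congr_right.mp hzq)]⟩

lemma AcyclicEC.anti (hφ : AcyclicEC H φ) (h : H' ≤ H) : AcyclicEC H' φ :=
  ⟨hφ.1.anti h, fun v w hw => by
    simpa [Walk.edges_mapLe_eq_edges] using hφ.2 v (w.mapLe h) (hw.mapLe h)⟩

end Colourings

section Update

variable {k : ℕ} {G H : SimpleGraph V} {φ : Sym2 V → Fin k} {c d κ : Fin k} {p q : V}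

lemma mem_edgeSet_bichromatic {e : Sym2 V} :
    e ∈ (bichromatic H φ c d).edgeSet ↔ e ∈ H.edgeSet ∧ (φ e = c ∨ φ e = d) := by
  induction e using Sym2.ind with
  | _ a b => rfl

variable [DecidableEq V]

lemma ProperEC.update_of_deleteEdges (hφ : ProperEC (G.deleteEdges {s(p, q)}) φ)
    (hp : κ ∉ Cset (G.deleteEdges {s(p, q)}) φ p) (hq : κ ∉ Cset (G.deleteEdges {s(p, q)}) φ q) :
    ProperEC G (Function.update φ s(p, q) κ) := by
  have hmem : ∀ f ∈ G.edgeSet, f ≠ s(p, q) → f ∈ (G.deleteEdges {s(p, q)}).edgeSet :=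
    fun f hf hfe => by simpa [edgeSet_deleteEdges] using ⟨hf, hfe⟩
  have key : ∀ f ∈ G.edgeSet, f ≠ s(p, q) → ∀ x ∈ f, x ∈ s(p, q) → φ f ≠ κ := by
    rintro f hf hfe x hxf hxe rfl
    rcases Sym2.mem_iff.mp hxe with rfl | rfl
    · exact hp (mem_Cset_of_mem_edgeSet (hmem f hf hfe) hxf)
    · exact hq (mem_Cset_of_mem_edgeSet (hmem f hf hfe) hxf)
  rintro e₁ h₁ e₂ h₂ hne ⟨x, hx₁, hx₂⟩
  by_cases he₁ : e₁ = s(p, q) <;> by_cases he₂ : e₂ = s(p, q)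
  · exact absurd (he₁.trans he₂.symm) hne
  · subst he₁
    rw [Function.update_self, Function.update_of_ne he₂]
    exact (key e₂ h₂ he₂ x hx₂ hx₁).symm
  · subst he₂
    rw [Function.update_self, Function.update_of_ne he₁]
    exact key e₁ h₁ he₁ x hx₁ hx₂
  · rw [Function.update_of_ne he₁, Function.update_of_ne he₂]
    exact hφ e₁ (hmem e₁ h₁ he₁) e₂ (hmem e₂ h₂ he₂) hne ⟨x, hx₁, hx₂⟩

theorem AcyclicEC.update_of_deleteEdges (hφ : AcyclicEC (G.deleteEdges {s(p, q)}) φ)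
    (hp : κ ∉ Cset (G.deleteEdges {s(p, q)}) φ p) (hq : κ ∉ Cset (G.deleteEdges {s(p, q)}) φ q)
    (hpath : ∀ c, ¬(bichromatic (G.deleteEdges {s(p, q)}) φ c κ).Reachable p q) :
    AcyclicEC G (Function.update φ s(p, q) κ) := by
  set ψ := Function.update φ s(p, q) κ
  have hψ : ∀ f, f ≠ s(p, q) → ψ f = φ f := fun f hf => Function.update_of_ne hf _ _
  refine ⟨hφ.1.update_of_deleteEdges hp hq, fun r w hw => ?_⟩
  by_contra! hcard
  by_cases he : s(p, q) ∈ w.edges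
  · obtain ⟨c, hc⟩ := exists_forall_eq_or_eq_of_card_le_two
      (List.mem_toFinset.mpr (List.mem_map_of_mem he)) hcard
    simp only [ψ, Function.update_self, List.mem_toFinset, List.mem_map,
      forall_exists_index, and_imp, forall_apply_eq_imp_iff₂] at hc
    have hB : ∀ f ∈ w.edges, f ∈ (bichromatic G ψ c κ).edgeSet :=
      fun f hf => mem_edgeSet_bichromatic.mpr ⟨w.edges_subset_edgeSet hf, hc f hf⟩
    obtain ⟨-, hreach⟩ := adj_and_reachable_delete_edges_iff_exists_cycle.mpr
      ⟨r, w.transfer _ hB, hw.transfer hB, by rwa [Walk.edges_transfer]⟩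
    refine hpath c (hreach.mono ?_)
    intro a b hab
    rw [deleteEdges_adj, bichromatic_adj] at hab
    obtain ⟨⟨hab, hcol⟩, hne⟩ := hab
    rw [hψ _ fun h => hne h] at hcol
    exact ⟨(deleteEdges_adj ..).mpr ⟨hab, hne⟩, hcol⟩
  · have hG : ∀ f ∈ w.edges, f ∈ (G.deleteEdges {s(p, q)}).edgeSet := fun f hf => by
      simpa [edgeSet_deleteEdges] using ⟨w.edges_subset_edgeSet hf, ne_of_mem_of_not_mem hf he⟩
    have := hφ.2 r (w.transfer _ hG) (hw.transfer hG)
    rw [Walk.edges_transfer, ← List.map_congr_left fun f hf => hψ f (ne_of_mem_of_not_mem hf he)]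
      at this
    omega

end Update

section Bichromatic

variable {k : ℕ} {G H : SimpleGraph V} {φ : Sym2 V → Fin k} {c d κ α : Fin k} {p q u v z : V}

lemma ProperEC.eq_or_eq_or_eq_of_bichromatic_adj (hφ : ProperEC H φ) (z w₁ w₂ w₃ : V)
    (h₁ : (bichromatic H φ c d).Adj z w₁) (h₂ : (bichromatic H φ c d).Adj z w₂)
    (h₃ : (bichromatic H φ c d).Adj z w₃) : w₁ = w₂ ∨ w₁ = w₃ ∨ w₂ = w₃ := by
  obtain ⟨h₁, c₁⟩ := h₁
  obtain ⟨h₂, c₂⟩ := h₂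
  obtain ⟨h₃, c₃⟩ := h₃
  rcases c₁ with e₁ | e₁ <;> rcases c₂ with e₂ | e₂ <;> rcases c₃ with e₃ | e₃ <;>
    first
    | exact Or.inl (hφ.eq_of_color_eq h₁ h₂ (e₁.trans e₂.symm))
    | exact Or.inr (Or.inl (hφ.eq_of_color_eq h₁ h₃ (e₁.trans e₃.symm)))
    | exact Or.inr (Or.inr (hφ.eq_of_color_eq h₂ h₃ (e₂.trans e₃.symm)))

lemma ProperEC.subsingleton_neighborSet_bichromatic (hφ : ProperEC H φ)
    (hd : d ∉ Cset H φ z) : ((bichromatic H φ c d).neighborSet z).Subsingleton := by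
  rintro a ⟨ha, ca⟩ b ⟨hb, cb⟩
  refine hφ.eq_of_color_eq ha hb ?_
  rw [ca.resolve_right fun h => hd ⟨a, ha, h⟩, cb.resolve_right fun h => hd ⟨b, hb, h⟩]

lemma mem_Cset_of_reachable (h : (bichromatic H φ c d).Reachable p q) (hpq : p ≠ q)
    (hd : d ∉ Cset H φ p) : c ∈ Cset H φ p := by
  obtain ⟨z, hz, hcol⟩ := h.exists_adj_of_ne hpq
  exact ⟨z, hz, hcol.resolve_right fun h => hd ⟨z, hz, h⟩⟩

lemma ProperEC.mem_Cset_of_reachable_of_forall_adj_eq (hφ : ProperEC H φ)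
    (hr : (bichromatic H φ c d).Reachable p q) (hpq : p ≠ q) (hzq : z ≠ q)
    (hp : ∀ t, (bichromatic H φ c d).Adj p t → t = z) (hq : d ∉ Cset H φ q) :
    d ∈ Cset H φ z := by
  by_contra hz
  obtain ⟨t, ht⟩ := hr.exists_adj_of_ne hpq
  obtain rfl := hp t ht
  exact hzq (eq_of_reachable_of_subsingleton hφ.eq_or_eq_or_eq_of_bichromatic_adj
    (fun a ha b hb => (hp a ha).trans (hp b hb).symm)
    (hφ.subsingleton_neighborSet_bichromatic hz) (hφ.subsingleton_neighborSet_bichromatic hq)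
    ht.ne hpq ht.reachable hr)

variable [DecidableEq V]

lemma AcyclicEC.update (hφ : AcyclicEC H φ) (hp : κ ∉ Cset (H.deleteEdges {s(p, q)}) φ p)
    (hq : κ ∉ Cset (H.deleteEdges {s(p, q)}) φ q)
    (hpath : ∀ c, ¬(bichromatic (H.deleteEdges {s(p, q)}) φ c κ).Reachable p q) :
    AcyclicEC H (Function.update φ s(p, q) κ) :=
  (hφ.anti (deleteEdges_le _)).update_of_deleteEdges hp hq hpath

lemma AcyclicEC.update_of_Cset_inter (hφ : AcyclicEC H φ) (hpq : H.Adj p q)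
    (hp : κ ∉ Cset H φ p) (hq : κ ∉ Cset H φ q)
    (hpq' : ∀ c ∈ Cset H φ p, c ∈ Cset H φ q → c = φ s(p, q)) :
    AcyclicEC H (Function.update φ s(p, q) κ) := by
  have hsub (w : V) := Cset_mono (φ := φ) (p := w) (deleteEdges_le (G := H) {s(p, q)})
  refine hφ.update (fun h => hp (hsub p h)) (fun h => hq (hsub q h)) fun c hr => ?_
  have hcp := mem_Cset_of_reachable hr hpq.ne fun h => hp (hsub p h)
  have hcq := mem_Cset_of_reachable hr.symm hpq.ne.symm fun h => hq (hsub q h)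
  exact hφ.1.color_notMem_Cset_deleteEdges hpq (hpq' c (hsub p hcp) (hsub q hcq) ▸ hcp)

end Bichromatic

section Blocked

variable {k : ℕ} {G H : SimpleGraph V} {ψ : Sym2 V → Fin k} {α : Fin k} {u v : V}

/-- No acyclic colouring of `H` extends to the edge `uv` by a colour `α` missing at both ends:
some bichromatic `(c, α)`-path from `u` to `v` always closes a cycle. -/
def Blocked (H : SimpleGraph V) (k : ℕ) (u v : V) : Prop :=
  ∀ φ : Sym2 V → Fin k, AcyclicEC H φ → ∀ α, α ∉ Cset H φ u → α ∉ Cset H φ v →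
    ∃ c, (bichromatic H φ c α).Reachable u v

lemma blocked_deleteEdges (h : ¬HasAEC G k) : Blocked (G.deleteEdges {s(u, v)}) k u v := by
  classical
  intro φ hφ α hu hv
  by_contra! hpath
  exact h ⟨_, hφ.update_of_deleteEdges hu hv hpath⟩

lemma Blocked.exists_adj (hB : Blocked H k u v) (huv : u ≠ v) (hψ : AcyclicEC H ψ)
    (hu : α ∉ Cset H ψ u) (hv : α ∉ Cset H ψ v) :
    ∃ z, H.Adj v z ∧ ψ s(v, z) ∈ Cset H ψ u ∧ (bichromatic H ψ (ψ s(v, z)) α).Reachable u v := by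
  obtain ⟨c, hr⟩ := hB ψ hψ α hu hv
  obtain ⟨z, hz, hcol⟩ := hr.symm.exists_adj_of_ne huv.symm
  obtain rfl : ψ s(v, z) = c := hcol.resolve_right fun h => hv ⟨z, hz, h⟩
  exact ⟨z, hz, mem_Cset_of_reachable hr huv hu, hr⟩

end Blocked

section Deficiency

variable [Finite V] {k Δ : ℕ} {H : SimpleGraph V} {ψ : Sym2 V → Fin k} {u : V}

lemma ncard_Cset_le_ncard_compl (hΔ : ∀ w, (H.neighborSet w).ncard ≤ Δ)
    (hu : (H.neighborSet u).ncard + Δ ≤ k) (w : V) : (Cset H ψ w).ncard ≤ (Cset H ψ u)ᶜ.ncard := by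
  have := (ncard_Cset_le (φ := ψ)).trans (hΔ w)
  have := ncard_Cset_le (H := H) (φ := ψ) (p := u)
  rw [Set.ncard_compl, Nat.card_fin]
  omega

lemma ncard_Cset_add_ncard_insert_le {b : Fin k} (hΔ : ∀ w, (H.neighborSet w).ncard ≤ Δ)
    (hu : (H.neighborSet u).ncard + Δ ≤ k) (hb : b ∉ Cset H ψ u) (z : V) :
    (Cset H ψ z).ncard + (insert b (Cset H ψ u)).ncard ≤ Nat.card (Fin k) + 1 := by
  have := (ncard_Cset_le (φ := ψ)).trans (hΔ z)
  have := ncard_Cset_le (H := H) (φ := ψ) (p := u)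
  rw [Set.ncard_insert_of_notMem hb, Nat.card_fin]
  omega

end Deficiency

/-- The situation at the degree-3 vertex `v`, with `H = G - uv`: there `v` keeps only the
neighbours `x` and `y`. -/
structure BlockedConfig (H : SimpleGraph V) (k : ℕ) (u v x y : V) : Prop where
  blocked : Blocked H k u v
  adj_iff : ∀ z, H.Adj v z ↔ z = x ∨ z = y
  x_ne_y : x ≠ y
  u_ne_x : u ≠ x
  u_ne_y : u ≠ y
  u_ne_v : u ≠ v

namespace BlockedConfig

variable {k Δ : ℕ} {H : SimpleGraph V} {ψ : Sym2 V → Fin k} {c α β γ : Fin k} {u v x y z : V}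

lemma swap (hC : BlockedConfig H k u v x y) : BlockedConfig H k u v y x :=
  ⟨hC.blocked, fun z => (hC.adj_iff z).trans or_comm, hC.x_ne_y.symm, hC.u_ne_y, hC.u_ne_x,
    hC.u_ne_v⟩

lemma adj_x (hC : BlockedConfig H k u v x y) : H.Adj v x := (hC.adj_iff x).mpr (Or.inl rfl)

lemma edge_ne (hC : BlockedConfig H k u v x y) : s(v, x) ≠ s(v, y) :=
  mt Sym2.congr_right.mp hC.x_ne_y

lemma not_adj_u (hC : BlockedConfig H k u v x y) : ¬H.Adj v u := by
  rw [hC.adj_iff]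
  exact not_or.mpr ⟨hC.u_ne_x, hC.u_ne_y⟩

lemma u_notMem (hC : BlockedConfig H k u v x y) : u ∉ s(v, x) := by
  simp [Sym2.mem_iff, hC.u_ne_v, hC.u_ne_x]

lemma mem_Cset_v_iff (hC : BlockedConfig H k u v x y) :
    c ∈ Cset H ψ v ↔ c = ψ s(v, x) ∨ c = ψ s(v, y) := by
  constructor
  · rintro ⟨z, hz, rfl⟩
    rcases (hC.adj_iff z).mp hz with rfl | rfl <;> simp
  · rintro (rfl | rfl)
    exacts [⟨x, hC.adj_x, rfl⟩, ⟨y, hC.swap.adj_x, rfl⟩]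

lemma color_ne (hC : BlockedConfig H k u v x y) (hψ : ProperEC H ψ) : ψ s(v, x) ≠ ψ s(v, y) :=
  fun h => hC.x_ne_y (hψ.eq_of_color_eq hC.adj_x hC.swap.adj_x h)

lemma Cset_deleteEdges_subset (hC : BlockedConfig H k u v x y) :
    Cset (H.deleteEdges {s(v, x)}) ψ v ⊆ {ψ s(v, y)} := by
  rintro c ⟨t, ht, rfl⟩
  rw [deleteEdges_adj] at ht
  rcases (hC.adj_iff t).mp ht.1 with rfl | rfl
  · exact (ht.2 rfl).elim
  · rfl

lemma exists_reachable (hC : BlockedConfig H k u v x y) (hψ : AcyclicEC H ψ)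
    (hu : α ∉ Cset H ψ u) (hx : α ≠ ψ s(v, x)) (hy : α ≠ ψ s(v, y)) :
    ψ s(v, x) ∈ Cset H ψ u ∧ (bichromatic H ψ (ψ s(v, x)) α).Reachable u v ∨
      ψ s(v, y) ∈ Cset H ψ u ∧ (bichromatic H ψ (ψ s(v, y)) α).Reachable u v := by
  obtain ⟨z, hz, h⟩ := hC.blocked.exists_adj hC.u_ne_v hψ hu (by rw [hC.mem_Cset_v_iff]; tauto)
  rcases (hC.adj_iff z).mp hz with rfl | rfl
  exacts [Or.inl h, Or.inr h]

lemma mem_Cset_x_of_reachable (hC : BlockedConfig H k u v x y) (hψ : ProperEC H ψ)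
    (hu : α ∉ Cset H ψ u) (hy : α ≠ ψ s(v, y))
    (hr : (bichromatic H ψ (ψ s(v, x)) α).Reachable u v) : α ∈ Cset H ψ x := by
  refine hψ.mem_Cset_of_reachable_of_forall_adj_eq hr.symm hC.u_ne_v.symm hC.u_ne_x.symm
    (fun t ⟨ht, hcol⟩ => ?_) hu
  rcases (hC.adj_iff t).mp ht with rfl | rfl
  · rfl
  · exact (hcol.elim (fun h => hC.color_ne hψ h.symm) fun h => hy h.symm).elim

lemma acyclicEC_update_x [DecidableEq V] (hC : BlockedConfig H k u v x y)
    (hψ : AcyclicEC H ψ) (hy : β ≠ ψ s(v, y)) (hx : β ∉ Cset H ψ x)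
    (hr : ¬(bichromatic H ψ (ψ s(v, y)) β).Reachable v x) :
    AcyclicEC H (Function.update ψ s(v, x) β) := by
  have hv : β ∉ Cset (H.deleteEdges {s(v, x)}) ψ v := fun h => hy (hC.Cset_deleteEdges_subset h)
  refine hψ.update hv (fun h => hx (Cset_mono (deleteEdges_le _) h)) fun c hc => ?_
  obtain rfl : c = ψ s(v, y) :=
    hC.Cset_deleteEdges_subset (mem_Cset_of_reachable hc hC.adj_x.ne hv)
  exact hr (hc.mono (bichromatic_mono (deleteEdges_le _)))

lemma false_of_notMem_of_notMem [Finite V] (hC : BlockedConfig H k u v x y)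
    (hψ : AcyclicEC H ψ) (hu : (H.neighborSet u).ncard + Δ ≤ k) (hΔ3 : 3 ≤ Δ)
    (ha : ψ s(v, x) ∉ Cset H ψ u) (hb : ψ s(v, y) ∉ Cset H ψ u) : False := by
  set T := insert (ψ s(v, x)) (insert (ψ s(v, y)) (Cset H ψ u))
  obtain ⟨α, hα⟩ : Tᶜ.Nonempty := by
    refine Set.nonempty_of_ncard_ne_zero ?_
    have h₁ := Set.ncard_add_ncard_compl T
    have h₂ : T.ncard ≤ _ := Set.ncard_insert_le _ _
    have h₂' := Set.ncard_insert_le (ψ s(v, y)) (Cset H ψ u)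
    have h₃ := ncard_Cset_le (H := H) (φ := ψ) (p := u)
    rw [Nat.card_fin] at h₁
    omega
  simp only [T, Set.mem_compl_iff, Set.mem_insert_iff, not_or] at hα
  rcases hC.exists_reachable hψ hα.2.2 hα.1 hα.2.1 with ⟨h, -⟩ | ⟨h, -⟩
  exacts [ha h, hb h]

lemma mem_Cset_x_of_not_reachable (hC : BlockedConfig H k u v x y) (hψ : AcyclicEC H ψ)
    (ha : ψ s(v, x) ∈ Cset H ψ u) (hb : ψ s(v, y) ∈ Cset H ψ u) (hγ : γ ∉ Cset H ψ u)
    (hr : ¬(bichromatic H ψ (ψ s(v, y)) γ).Reachable u v) : γ ∈ Cset H ψ x := by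
  have hγb := (ne_of_mem_of_not_mem hb hγ).symm
  rcases hC.exists_reachable hψ hγ (ne_of_mem_of_not_mem ha hγ).symm hγb with
    ⟨-, h⟩ | ⟨-, h⟩
  exacts [hC.mem_Cset_x_of_reachable hψ.1 hγ hγb h, (hr h).elim]

lemma false_of_mem_of_mem [Finite V] [DecidableEq V] (hC : BlockedConfig H k u v x y)
    (hψ : AcyclicEC H ψ) (hΔ : ∀ w, (H.neighborSet w).ncard ≤ Δ)
    (hu : (H.neighborSet u).ncard + Δ ≤ k)
    (ha : ψ s(v, x) ∈ Cset H ψ u) (hb : ψ s(v, y) ∈ Cset H ψ u) : False := by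
  obtain ⟨β, hβu, hβx⟩ := exists_mem_notMem_of_ncard_le (Set.notMem_compl_iff.mpr ha)
    (mem_Cset_of_adj hC.adj_x) (ncard_Cset_le_ncard_compl hΔ hu x)
  have hβr : (bichromatic H ψ (ψ s(v, y)) β).Reachable u v := by
    by_contra h
    exact hβx (hC.mem_Cset_x_of_not_reachable hψ ha hb hβu h)
  have hβy := hC.swap.mem_Cset_x_of_reachable hψ.1 hβu (ne_of_mem_of_not_mem ha hβu).symm hβr
  obtain ⟨α, hαu, hαy⟩ := exists_mem_notMem_of_ncard_le (Set.notMem_compl_iff.mpr hb)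
    (mem_Cset_of_adj hC.swap.adj_x) (ncard_Cset_le_ncard_compl hΔ hu y)
  have hψ' : AcyclicEC H (Function.update ψ s(v, x) β) := by
    refine hC.acyclicEC_update_x hψ (ne_of_mem_of_not_mem hb hβu).symm hβx fun h => ?_
    refine hC.u_ne_x (eq_of_reachable_of_subsingleton hψ.1.eq_or_eq_or_eq_of_bichromatic_adj
      (hψ.1.subsingleton_neighborSet_bichromatic ?_)
      (hψ.1.subsingleton_neighborSet_bichromatic hβu)
      (hψ.1.subsingleton_neighborSet_bichromatic hβx)
      hC.u_ne_v.symm hC.adj_x.ne hβr.symm h)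
    rw [hC.mem_Cset_v_iff]
    exact not_or.mpr ⟨(ne_of_mem_of_not_mem ha hβu).symm, (ne_of_mem_of_not_mem hb hβu).symm⟩
  have hy' : Function.update ψ s(v, x) β s(v, y) = ψ s(v, y) :=
    Function.update_of_ne hC.edge_ne.symm _ _
  have hu' := Cset_update_of_notMem (H := H) (φ := ψ) (κ := β) hC.u_notMem
  rcases hC.exists_reachable hψ' (hu' ▸ hαu)
    (by simpa using (ne_of_mem_of_not_mem hβy hαy).symm)
    (hy' ▸ (ne_of_mem_of_not_mem hb hαu).symm) with ⟨h, -⟩ | ⟨-, h⟩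
  · rw [hu', Function.update_self] at h
    exact hβu h
  · rw [hy'] at h
    refine hαy (hC.swap.mem_Cset_x_of_reachable hψ.1 hαu (ne_of_mem_of_not_mem ha hαu).symm
      (h.mono (bichromatic_update_le ?_ ?_)))
    exacts [(ne_of_mem_of_not_mem hb hβu).symm, ne_of_mem_of_not_mem hβy hαy]

lemma reachable_of_notMem_insert (hC : BlockedConfig H k u v x y) (hψ : AcyclicEC H ψ)
    (ha : ψ s(v, x) ∈ Cset H ψ u) (hb : ψ s(v, y) ∉ Cset H ψ u)
    (hα : α ∉ insert (ψ s(v, y)) (Cset H ψ u)) :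
    (bichromatic H ψ (ψ s(v, x)) α).Reachable u v := by
  rw [Set.mem_insert_iff, not_or] at hα
  rcases hC.exists_reachable hψ hα.2 (ne_of_mem_of_not_mem ha hα.2).symm hα.1 with
    ⟨-, h⟩ | ⟨h, -⟩
  exacts [h, (hb h).elim]

lemma Cset_x_eq [Finite V] (hC : BlockedConfig H k u v x y) (hψ : AcyclicEC H ψ)
    (hΔ : ∀ w, (H.neighborSet w).ncard ≤ Δ) (hu : (H.neighborSet u).ncard + Δ ≤ k)
    (ha : ψ s(v, x) ∈ Cset H ψ u) (hb : ψ s(v, y) ∉ Cset H ψ u) :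
    Cset H ψ x = insert (ψ s(v, x)) (insert (ψ s(v, y)) (Cset H ψ u))ᶜ := by
  refine eq_insert_compl_of_ncard_le (Set.mem_insert_of_mem _ ha) (fun α hα => ?_)
    (mem_Cset_of_adj hC.adj_x) (ncard_Cset_add_ncard_insert_le hΔ hu hb x)
  have hα' := hα
  rw [Set.mem_compl_iff, Set.mem_insert_iff, not_or] at hα'
  exact hC.mem_Cset_x_of_reachable hψ.1 hα'.2 hα'.1 (hC.reachable_of_notMem_insert hψ ha hb hα)

lemma Cset_eq_of_adj [Finite V] (hC : BlockedConfig H k u v x y) (hψ : AcyclicEC H ψ)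
    (hΔ : ∀ w, (H.neighborSet w).ncard ≤ Δ) (hu : (H.neighborSet u).ncard + Δ ≤ k)
    (ha : ψ s(v, x) ∈ Cset H ψ u) (hb : ψ s(v, y) ∉ Cset H ψ u) (hz : H.Adj u z)
    (hza : ψ s(u, z) = ψ s(v, x)) :
    Cset H ψ z = insert (ψ s(v, x)) (insert (ψ s(v, y)) (Cset H ψ u))ᶜ := by
  refine eq_insert_compl_of_ncard_le (Set.mem_insert_of_mem _ ha) (fun α hα => ?_)
    (hza ▸ mem_Cset_of_adj hz) (ncard_Cset_add_ncard_insert_le hΔ hu hb z)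
  have hα' := hα
  rw [Set.mem_compl_iff, Set.mem_insert_iff, not_or] at hα'
  refine hψ.1.mem_Cset_of_reachable_of_forall_adj_eq (hC.reachable_of_notMem_insert hψ ha hb hα)
    hC.u_ne_v (fun h => hC.not_adj_u (h ▸ hz).symm) (fun t ⟨ht, hcol⟩ => ?_) ?_
  · refine hψ.1.eq_of_color_eq ht hz (hza ▸ hcol.resolve_right fun h => hα'.2 ⟨t, ht, h⟩)
  · rw [hC.mem_Cset_v_iff]
    exact not_or.mpr ⟨(ne_of_mem_of_not_mem ha hα'.2).symm, hα'.1⟩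

/-- Recolouring `vx` with `β` leaves `α` blockable only by a `(β, α)`-path, which enters `v`
through `x`. -/
lemma reachable_x [DecidableEq V] (hC : BlockedConfig H k u v x y) (hψ : AcyclicEC H ψ)
    (hβu : β ∈ Cset H ψ u) (hbu : ψ s(v, y) ∉ Cset H ψ u) (hβx : β ∉ Cset H ψ x)
    (hbx : ψ s(v, y) ∉ Cset H ψ x) (hαu : α ∉ Cset H ψ u) (hαb : α ≠ ψ s(v, y)) :
    (bichromatic H ψ β α).Reachable u x := by
  set ψ' := Function.update ψ s(v, x) β
  have hβb : β ≠ ψ s(v, y) := ne_of_mem_of_not_mem hβu hbu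
  have hψ' : AcyclicEC H ψ' := hC.acyclicEC_update_x hψ hβb hβx fun h =>
    hbx (mem_Cset_of_reachable h.symm hC.adj_x.ne.symm hβx)
  have hx' : ψ' s(v, x) = β := Function.update_self ..
  have hy' : ψ' s(v, y) = ψ s(v, y) := Function.update_of_ne hC.edge_ne.symm _ _
  have hu' : Cset H ψ' u = Cset H ψ u := Cset_update_of_notMem hC.u_notMem
  rcases hC.exists_reachable hψ' (hu' ▸ hαu)
    (hx' ▸ (ne_of_mem_of_not_mem hβu hαu).symm) (hy' ▸ hαb) with
    ⟨-, h⟩ | ⟨h, -⟩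
  · rw [hx'] at h
    refine h.of_forall_adj_eq hC.u_ne_v (fun t ⟨ht, hcol⟩ => ?_) fun a b hab ha hb => ?_
    · rcases (hC.adj_iff t).mp ht with rfl | rfl
      · rfl
      · rw [hy'] at hcol
        exact (hcol.elim (fun h => hβb h.symm) fun h => hαb h.symm).elim
    · have hne : s(a, b) ≠ s(v, x) := fun h => by
        rcases Sym2.mem_iff.mp (h ▸ Sym2.mem_mk_left v x) with h | h
        exacts [ha h.symm, hb h.symm]
      exact ⟨hab.1, Function.update_of_ne hne β ψ ▸ hab.2⟩
  · rw [hy', hu'] at h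
    exact (hbu h).elim

lemma color_y_notMem_Cset_of_adj [Finite V] (hC : BlockedConfig H k u v x y)
    (hψ : AcyclicEC H ψ) (hΔ : ∀ w, (H.neighborSet w).ncard ≤ Δ)
    (hu : (H.neighborSet u).ncard + Δ ≤ k) (hz : H.Adj u z) (hza : ψ s(u, z) = ψ s(v, x))
    (hb : ψ s(v, y) ∉ Cset H ψ u) : ψ s(v, y) ∉ Cset H ψ z := by
  rw [hC.Cset_eq_of_adj hψ hΔ hu ⟨z, hz, hza⟩ hb hz hza]
  simp [(hC.color_ne hψ.1).symm]

lemma acyclicEC_update_u [Finite V] [DecidableEq V] (hC : BlockedConfig H k u v x y)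
    (hψ : AcyclicEC H ψ) (hΔ : ∀ w, (H.neighborSet w).ncard ≤ Δ)
    (hu : (H.neighborSet u).ncard + Δ ≤ k) (hz : H.Adj u z) (hza : ψ s(u, z) = ψ s(v, x))
    (hb : ψ s(v, y) ∉ Cset H ψ u) : AcyclicEC H (Function.update ψ s(u, z) (ψ s(v, y))) := by
  refine hψ.update_of_Cset_inter hz hb (hC.color_y_notMem_Cset_of_adj hψ hΔ hu hz hza hb)
    fun c hcu hcz => ?_
  rw [hC.Cset_eq_of_adj hψ hΔ hu ⟨z, hz, hza⟩ hb hz hza] at hcz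
  simpa [hza, hcu] using hcz

/-- Recolouring `uz`, the edge of colour `ψ s(v, x)` at `u`, with `ψ s(v, y)` swaps the roles of
`x` and `y`, so the `x`-side argument applies on the `y` side. -/
lemma notMem_Cset_y_and_reachable_y [Finite V] [DecidableEq V]
    (hC : BlockedConfig H k u v x y) (hψ : AcyclicEC H ψ) (hΔ : ∀ w, (H.neighborSet w).ncard ≤ Δ)
    (hu : (H.neighborSet u).ncard + Δ ≤ k) (hz : H.Adj u z) (hza : ψ s(u, z) = ψ s(v, x))
    (hb : ψ s(v, y) ∉ Cset H ψ u) (hβ : β ∈ Cset H ψ u) (hβa : β ≠ ψ s(v, x))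
    (hα : α ∉ insert (ψ s(v, y)) (Cset H ψ u)) :
    β ∉ Cset H ψ y ∧ (bichromatic H ψ β α).Reachable u y := by
  have ha : ψ s(v, x) ∈ Cset H ψ u := ⟨z, hz, hza⟩
  rw [Set.mem_insert_iff, not_or] at hα
  have hab := hC.color_ne hψ.1
  have hβb := ne_of_mem_of_not_mem hβ hb
  have hvz : v ∉ s(u, z) := by
    simp only [Sym2.mem_iff, not_or]
    exact ⟨hC.u_ne_v.symm, fun h => hC.not_adj_u (h ▸ hz).symm⟩
  have hyz : y ∉ s(u, z) := by
    simp only [Sym2.mem_iff, not_or]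
    exact ⟨hC.u_ne_y.symm, fun h => hC.color_y_notMem_Cset_of_adj hψ hΔ hu hz hza hb
      (h ▸ mem_Cset_of_adj hC.swap.adj_x)⟩
  have hψ' := hC.acyclicEC_update_u hψ hΔ hu hz hza hb
  set ψ' := Function.update ψ s(u, z) (ψ s(v, y))
  have hCu : Cset H ψ' u = insert (ψ s(v, y)) (Cset H ψ u \ {ψ s(v, x)}) :=
    hza ▸ hψ.1.Cset_update hz
  have hx' : ψ' s(v, x) = ψ s(v, x) := update_mk_of_notMem hvz
  have hy' : ψ' s(v, y) = ψ s(v, y) := update_mk_of_notMem hvz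
  have hCy : Cset H ψ' y = Cset H ψ y := Cset_update_of_notMem hyz
  have hau : ψ' s(v, x) ∉ Cset H ψ' u := by simp [hCu, hx', hab]
  have hbu : ψ' s(v, y) ∈ Cset H ψ' u := by simp [hCu, hy']
  have hsat := hC.swap.Cset_x_eq hψ' hΔ hu hbu hau
  have hβy : β ∉ Cset H ψ' y := by simp [hsat, hCu, hy', hβ, hβa, hβb]
  have hβu : β ∈ Cset H ψ' u := by simp [hCu, hβ, hβa]
  have hay : ψ' s(v, x) ∉ Cset H ψ' y := by simp [hsat, hx', hy', hab]
  have hαu : α ∉ Cset H ψ' u := by simp [hCu, hα.1, hα.2]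
  have hαa : α ≠ ψ' s(v, x) := hx' ▸ (ne_of_mem_of_not_mem ha hα.2).symm
  exact ⟨hCy ▸ hβy, (hC.swap.reachable_x hψ' hβu hau hβy hay hαu hαa).mono
    (bichromatic_update_le hβb.symm (Ne.symm hα.1))⟩

lemma false_of_mem_of_notMem [Finite V] [DecidableEq V] (hC : BlockedConfig H k u v x y)
    (hψ : AcyclicEC H ψ) (hΔ : ∀ w, (H.neighborSet w).ncard ≤ Δ)
    (hu : (H.neighborSet u).ncard + Δ ≤ k) (hk : Δ + 2 ≤ k) (hΔ2 : 2 ≤ Δ)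
    (ha : ψ s(v, x) ∈ Cset H ψ u) (hb : ψ s(v, y) ∉ Cset H ψ u) : False := by
  have hx := hC.Cset_x_eq hψ hΔ hu ha hb
  set T := insert (ψ s(v, y)) (Cset H ψ u)
  have hT : T.ncard + Tᶜ.ncard = k := by rw [Set.ncard_add_ncard_compl, Nat.card_fin]
  have hTu : T.ncard = (Cset H ψ u).ncard + 1 := Set.ncard_insert_of_notMem hb
  have hCu := ncard_Cset_le (H := H) (φ := ψ) (p := u)
  obtain ⟨α, hα⟩ : Tᶜ.Nonempty := Set.nonempty_of_ncard_ne_zero (by omega)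
  obtain ⟨β, hβ, hβa⟩ : ∃ β ∈ Cset H ψ u, β ≠ ψ s(v, x) := by
    refine Set.exists_ne_of_one_lt_ncard ?_ _
    have hxΔ := (ncard_Cset_le (φ := ψ)).trans (hΔ x)
    have hxT : (Cset H ψ x).ncard = Tᶜ.ncard + 1 := by
      rw [hx]
      exact Set.ncard_insert_of_notMem (Set.notMem_compl_iff.mpr (Set.mem_insert_of_mem _ ha))
    omega
  have hβb := ne_of_mem_of_not_mem hβ hb
  have hβx : β ∉ Cset H ψ x := by simp [hx, T, hβ, hβa]
  have hbx : ψ s(v, y) ∉ Cset H ψ x := by simp [hx, T, (hC.color_ne hψ.1).symm]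
  simp only [T, Set.mem_compl_iff, Set.mem_insert_iff, not_or] at hα
  obtain ⟨z, hz, hza⟩ := ha
  obtain ⟨hβy, hry⟩ := hC.notMem_Cset_y_and_reachable_y hψ hΔ hu hz hza hb hβ hβa
    (by simpa using hα)
  have hrx := hC.reachable_x hψ hβ hb hβx hbx hα.2 hα.1
  refine hC.x_ne_y (eq_of_reachable_of_subsingleton hψ.1.eq_or_eq_or_eq_of_bichromatic_adj
    (hψ.1.subsingleton_neighborSet_bichromatic hα.2) ?_ ?_ hC.u_ne_x hC.u_ne_y hrx hry)
  all_goals rw [bichromatic_comm]; apply hψ.1.subsingleton_neighborSet_bichromatic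
  exacts [hβx, hβy]

theorem not_hasAEC [Finite V] (hC : BlockedConfig H k u v x y)
    (hΔ : ∀ w, (H.neighborSet w).ncard ≤ Δ) (hu : (H.neighborSet u).ncard + Δ ≤ k)
    (hΔ3 : 3 ≤ Δ) (hk : Δ + 2 ≤ k) : ¬HasAEC H k := by
  classical
  rintro ⟨ψ, hψ⟩
  by_cases ha : ψ s(v, x) ∈ Cset H ψ u <;> by_cases hb : ψ s(v, y) ∈ Cset H ψ u
  · exact hC.false_of_mem_of_mem hψ hΔ hu ha hb
  · exact hC.false_of_mem_of_notMem hψ hΔ hu hk (by omega) ha hb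
  · exact hC.swap.false_of_mem_of_notMem hψ hΔ hu hk (by omega) hb ha
  · exact hC.false_of_notMem_of_notMem hψ hu hΔ3 ha hb

end BlockedConfig

section FiniteGraphs

variable [Fintype V] {G : SimpleGraph V} [DecidableRel G.Adj] {k : ℕ} {u v : V}

lemma ncard_neighborSet_eq_degree (w : V) : (G.neighborSet w).ncard = G.degree w := by
  rw [← Nat.card_coe_set_eq, Nat.card_eq_fintype_card, card_neighborSet_eq_degree]

lemma ncard_neighborSet_deleteEdges_le (s : Set (Sym2 V)) (w : V) :
    ((G.deleteEdges s).neighborSet w).ncard ≤ G.degree w :=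
  ncard_neighborSet_eq_degree (G := G) w ▸
    Set.ncard_le_ncard fun _ h => (deleteEdges_le s : G.deleteEdges s ≤ G) h

lemma ncard_neighborSet_deleteEdges_add_one (huv : G.Adj u v) :
    ((G.deleteEdges {s(u, v)}).neighborSet u).ncard + 1 = G.degree u := by
  have : (G.deleteEdges {s(u, v)}).neighborSet u = G.neighborSet u \ {v} := by
    ext z
    simp [huv.ne]
  rw [this, Set.ncard_sdiff_singleton_add_one ((G.mem_neighborSet u v).mpr huv),
    ncard_neighborSet_eq_degree]

lemma exists_blockedConfig (hG : ¬HasAEC G k) (hvu : G.Adj v u) (hv : G.degree v = 3) :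
    ∃ x y, BlockedConfig (G.deleteEdges {s(u, v)}) k u v x y := by
  classical
  obtain ⟨x, y, hxy, hN⟩ := Finset.card_eq_two.mp <| by
    rw [Finset.card_erase_of_mem ((G.mem_neighborFinset v u).mpr hvu),
      card_neighborFinset_eq_degree, hv]
  have hmem : ∀ z, G.Adj v z ∧ z ≠ u ↔ z = x ∨ z = y := fun z => by
    simpa [and_comm] using Finset.ext_iff.mp hN z
  refine ⟨x, y, blocked_deleteEdges hG, fun z => ?_, hxy, fun h => ?_, fun h => ?_, hvu.ne.symm⟩
  · rw [deleteEdges_adj, ← hmem]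
    simp [hvu.ne]
  · exact ((hmem x).mpr (Or.inl rfl)).2 h.symm
  · exact ((hmem y).mpr (Or.inr rfl)).2 h.symm

end FiniteGraphs

/-- In an acyclically edge `k`-critical graph with `k ≥ Δ(G) + 2`, every neighbor
of a vertex of degree 3 has degree at least `k - Δ(G) + 2`. -/
theorem critical_neighbors_of_threeVertex
    {V : Type u} [Fintype V] (G : SimpleGraph V) [DecidableRel G.Adj] (k : ℕ)
    (hG : AcyclicallyEdgeCritical G k) (hk : G.maxDegree + 2 ≤ k)
    (v : V) (hv : G.degree v = 3) :
    ∀ u, G.Adj v u → k - G.maxDegree + 2 ≤ G.degree u := by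
  classical
  intro u hvu
  by_contra! hdeg
  obtain ⟨x, y, hC⟩ := exists_blockedConfig hG.1 hvu hv
  have hne : G.deleteEdges {s(u, v)} ≠ G := fun h => by
    have : (G.deleteEdges {s(u, v)}).Adj u v := h.symm ▸ hvu.symm
    simp at this
  have hu := ncard_neighborSet_deleteEdges_add_one (G := G) hvu.symm
  refine hC.not_hasAEC (fun w => (ncard_neighborSet_deleteEdges_le _ w).trans
    (G.degree_le_maxDegree w)) (by omega) (hv ▸ G.degree_le_maxDegree v) hk
    (hG.2 _ (deleteEdges_le _) hne)
end

section
/- Let G be an acyclically edge k-critical graph with k > Δ(G) and let v be a vertex of degree 2 in G. Then every neighbor of v has degree at least k − Δ(G) + 3. -/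
open SimpleGraph Finset

universe u

variable {V : Type u}

/-!
Let `u, w` be the neighbors of `v` and `H = G - v`. By criticality `H` has an acyclic edge
coloring `φ`, and `φ` extends to `G` unless, for all colors `b ∉ C(w)` and `c ∉ C(u)`, a
`(b, c)`-colored path joins `u` and `w`. These paths force `C(u) ∪ C(w)` to contain all `k` colors.
If `d(u) ≤ k - Δ + 2`, counting then shows that `C(u)` and `C(w)` are disjoint, `d(w) = Δ`, and
each neighbor `y` of `u` sees exactly the colors of `C(w)` besides `φ(uy)`. Exchanging the colors
of two edges `uy`, `uy'` therefore keeps the coloring acyclic, while for `b = φ(uy)` and `c ∈ C(w)`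
the new `(b, c)`-path from `u` leaves through `y'`: the `(b, c)`-component of `w`, a path, would
have the three ends `u`, `w` and `y'`.
-/

namespace SimpleGraph

variable {G B : SimpleGraph V}

lemma ncard_neighborSet_eq_degree [Fintype V] [DecidableRel G.Adj] (x : V) :
    (G.neighborSet x).ncard = G.degree x := by
  rw [Set.ncard_eq_toFinset_card', Set.toFinset_card, card_neighborSet_eq_degree]

lemma exists_neighborSet_eq_pair [Fintype V] [DecidableRel G.Adj] {v u : V}
    (hv : G.degree v = 2) (hu : G.Adj v u) : ∃ w, w ≠ u ∧ G.neighborSet v = {u, w} := by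
  classical
  obtain ⟨a, b, hab, hnbr⟩ := Finset.card_eq_two.mp ((G.card_neighborFinset_eq_degree v).trans hv)
  have hset : G.neighborSet v = {a, b} := by rw [← coe_neighborFinset, hnbr]; simp
  have hu' : u ∈ G.neighborSet v := hu
  rw [hset] at hu'
  rcases hu' with rfl | rfl
  · exact ⟨b, hab.symm, hset⟩
  · exact ⟨a, hab, by rw [hset, Set.pair_comm]⟩

lemma deleteIncidenceSet_ne {v u : V} (hu : G.Adj v u) :
    G.deleteIncidenceSet v ≠ G := fun h => by
  rw [← h, deleteIncidenceSet_adj] at hu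
  exact hu.2.1 rfl

lemma ncard_neighborSet_deleteIncidenceSet_le [Fintype V] [DecidableRel G.Adj]
    (v x : V) : ((G.deleteIncidenceSet v).neighborSet x).ncard ≤ G.degree x :=
  (Set.ncard_le_ncard (neighborSet_mono (G.deleteIncidenceSet_le v) x)).trans_eq
    (ncard_neighborSet_eq_degree x)

lemma ncard_neighborSet_deleteIncidenceSet_add_one [Fintype V]
    [DecidableRel G.Adj] {v y : V} (hy : G.Adj v y) :
    ((G.deleteIncidenceSet v).neighborSet y).ncard + 1 = G.degree y := by
  have : (G.deleteIncidenceSet v).neighborSet y = G.neighborSet y \ {v} := by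
    ext z
    simp [deleteIncidenceSet_adj, hy.ne', and_comm]
  rw [this, Set.ncard_sdiff_singleton_add_one (s := G.neighborSet y) hy.symm,
    ncard_neighborSet_eq_degree]

lemma notMem_of_mem_edges_of_notMem_support {x a b : V} {p : G.Walk a b}
    (hx : x ∉ p.support) {e : Sym2 V} (he : e ∈ p.edges) : x ∉ e := fun hxe => by
  obtain ⟨y, rfl⟩ := Sym2.mem_iff_exists.mp hxe
  exact hx (p.fst_mem_support_of_mem_edges he)

lemma mem_edgeSet_deleteIncidenceSet_of_notMem_support {x a b : V}
    {p : G.Walk a b} (hx : x ∉ p.support) {e : Sym2 V} (he : e ∈ p.edges) :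
    e ∈ (G.deleteIncidenceSet x).edgeSet := by
  rw [edgeSet_deleteIncidenceSet]
  exact ⟨p.edges_subset_edgeSet he, fun hinc => notMem_of_mem_edges_of_notMem_support hx he hinc.2⟩

lemma notMem_of_mem_edgeSet_deleteIncidenceSet {x : V} {e : Sym2 V}
    (he : e ∈ (G.deleteIncidenceSet x).edgeSet) : x ∉ e := by
  rw [edgeSet_deleteIncidenceSet] at he
  exact fun hx => he.2 ⟨he.1, hx⟩

theorem Walk.IsPath.end_mem_support_or
    (hB : ∀ ⦃x y₁ y₂ y₃⦄, B.Adj x y₁ → B.Adj x y₂ → B.Adj x y₃ → y₁ = y₂ ∨ y₁ = y₃ ∨ y₂ = y₃)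
    {m x y : V} {p : B.Walk m x} {q : B.Walk m y} (hp : p.IsPath) (hq : q.IsPath)
    (hm : ∀ ⦃z z'⦄, B.Adj m z → B.Adj m z' → z ∈ p.support → z' ∈ q.support → z = z') :
    x ∈ q.support ∨ y ∈ p.support := by
  induction p with
  | nil => exact .inl q.start_mem_support
  | @cons m a x h p ih =>
    cases q with
    | nil => exact .inr (Walk.start_mem_support _)
    | @cons _ a' _ h' q =>
      obtain rfl : a = a' := hm h h' (by simp) (by simp)
      rw [cons_isPath_iff] at hp hq
      have key := ih hp.1 hq.1 fun z z' hz hz' hzp hzq => by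
        rcases hB h.symm hz hz' with rfl | rfl | h
        · exact absurd hzp hp.2
        · exact absurd hzq hq.2
        · exact h
      simp only [support_cons, List.mem_cons]
      tauto

theorem Walk.IsPath.not_subsingleton_neighborSet {a b : V} {p : B.Walk a b} (hp : p.IsPath)
    {x : V} (hx : x ∈ p.support) (hxa : x ≠ a) (hxb : x ≠ b) :
    ¬ (B.neighborSet x).Subsingleton := by
  obtain ⟨i, rfl, hi⟩ := Walk.mem_support_iff_exists_getVert.mp hx
  have h2 := hp.ncard_neighborSet_toSubgraph_internal_eq_two (i := i)
    (by rintro rfl; simp at hxa) (lt_of_le_of_ne hi (by rintro rfl; simp at hxb))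
  have hfin : (p.toSubgraph.neighborSet (p.getVert i)).Finite := Set.finite_of_ncard_pos (by omega)
  obtain ⟨y, z, hy, hz, hyz⟩ := (Set.one_lt_ncard_iff hfin).mp (by omega)
  exact fun hsub => hyz (hsub (p.toSubgraph.neighborSet_subset _ hy)
    (p.toSubgraph.neighborSet_subset _ hz))

theorem eq_or_eq_or_eq_of_reachable
    (hB : ∀ ⦃x y₁ y₂ y₃⦄, B.Adj x y₁ → B.Adj x y₂ → B.Adj x y₃ → y₁ = y₂ ∨ y₁ = y₃ ∨ y₂ = y₃)
    {x₁ x₂ x₃ : V} (h₁ : (B.neighborSet x₁).Subsingleton) (h₂ : (B.neighborSet x₂).Subsingleton)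
    (h₃ : (B.neighborSet x₃).Subsingleton) (h₁₂ : B.Reachable x₁ x₂) (h₁₃ : B.Reachable x₁ x₃) :
    x₁ = x₂ ∨ x₁ = x₃ ∨ x₂ = x₃ := by
  by_contra! hne
  obtain ⟨p, hp⟩ := h₁₂.exists_isPath
  obtain ⟨q, hq⟩ := h₁₃.exists_isPath
  rcases hp.end_mem_support_or hB hq (fun z z' hz hz' _ _ => h₁ hz hz') with h | h
  · exact hq.not_subsingleton_neighborSet h hne.1.symm hne.2.2 h₂
  · exact hp.not_subsingleton_neighborSet h hne.2.1.symm hne.2.2.symm h₃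

theorem Walk.IsCycle.exists_walk_avoiding {r x : V} {K : G.Walk r r}
    (hK : K.IsCycle) (hx : x ∈ K.support) :
    ∃ (y z : V) (R : G.Walk y z), y ≠ z ∧ s(x, y) ∈ K.edges ∧ s(x, z) ∈ K.edges ∧
      x ∉ R.support ∧ ∀ e ∈ R.edges, e ∈ K.edges := by
  classical
  have hedges : ∀ e, e ∈ (K.rotate x hx).edges ↔ e ∈ K.edges :=
    fun e => (K.rotate_edges x hx).mem_iff
  have hC := hK.rotate hx
  simp only [← hedges]
  generalize K.rotate x hx = C at hC
  cases C with
  | nil => exact absurd hC not_isCycle_nil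
  | @cons _ y _ hxy p =>
    rw [cons_isCycle_iff] at hC
    have hpath := hC.1.reverse
    have hpedges : ∀ e, e ∈ p.edges ↔ e ∈ p.reverse.edges := by simp [edges_reverse]
    cases hq : p.reverse with
    | nil => exact absurd rfl hxy.ne
    | @cons _ z _ hxz R =>
      rw [hq, cons_isPath_iff] at hpath
      simp only [hq, edges_cons, List.mem_cons] at hpedges
      refine ⟨y, z, R.reverse, ?_, by simp, by simp [hpedges], by simpa using hpath.2, ?_⟩
      · rintro rfl
        exact hC.2 ((hpedges _).mpr (.inl rfl))
      · intro e he
        rw [edges_reverse, List.mem_reverse] at he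
        simp [hpedges, he]

end SimpleGraph

variable {k : ℕ}

section Colorings

variable {G H : SimpleGraph V} {x : V} {φ ψ : Sym2 V → Fin k}

theorem properEC_iff : ProperEC H φ ↔
    ∀ ⦃x y y' : V⦄, H.Adj x y → H.Adj x y' → φ s(x, y) = φ s(x, y') → y = y' := by
  constructor
  · intro hφ x y y' hy hy' h
    by_contra hne
    exact hφ _ hy _ hy' (fun he => hne (Sym2.congr_right.mp he)) ⟨x, by simp, by simp⟩ h
  · rintro hφ e₁ he₁ e₂ he₂ hne ⟨x, hx₁, hx₂⟩ h
    obtain ⟨y, rfl⟩ := Sym2.mem_iff_exists.mp hx₁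
    obtain ⟨y', rfl⟩ := Sym2.mem_iff_exists.mp hx₂
    exact hne (congrArg (fun z => s(x, z)) (hφ he₁ he₂ h))

lemma ProperEC.eq_of_color_eq_s6 (hφ : ProperEC H φ) {x y y' : V} (hy : H.Adj x y)
    (hy' : H.Adj x y') (h : φ s(x, y) = φ s(x, y')) : y = y' :=
  properEC_iff.mp hφ hy hy' h

lemma ProperEC.ncard_cset (hφ : ProperEC H φ) (x : V) :
    (Cset H φ x).ncard = (H.neighborSet x).ncard := by
  have : Cset H φ x = (fun y => φ s(x, y)) '' H.neighborSet x := by ext; simp [Cset]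
  rw [this, Set.InjOn.ncard_image]
  exact fun y hy y' hy' h => hφ.eq_of_color_eq_s6 hy hy' h

lemma cset_congr (h : ∀ e ∈ H.edgeSet, ψ e = φ e) (x : V) : Cset H ψ x = Cset H φ x := by
  ext c
  exact exists_congr fun y => and_congr_right fun hy => by rw [h s(x, y) hy]

lemma AcyclicEC.of_le (hφ : AcyclicEC G φ) (hHG : H ≤ G) (h : ∀ e ∈ H.edgeSet, ψ e = φ e) :
    AcyclicEC H ψ := by
  refine ⟨fun e₁ he₁ e₂ he₂ hne hx => ?_, fun r K hK => ?_⟩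
  · rw [h e₁ he₁, h e₂ he₂]
    exact hφ.1 e₁ (edgeSet_mono hHG he₁) e₂ (edgeSet_mono hHG he₂) hne hx
  · have hKG : ∀ e ∈ K.edges, e ∈ G.edgeSet :=
      fun e he => edgeSet_mono hHG (K.edges_subset_edgeSet he)
    have := hφ.2 r (K.transfer G hKG) (hK.transfer hKG)
    rwa [Walk.edges_transfer, ← List.map_congr_left (fun e he => h e (K.edges_subset_edgeSet he))]
      at this

def bicolored (H : SimpleGraph V) (φ : Sym2 V → Fin k) (b c : Fin k) : SimpleGraph V where
  Adj x y := H.Adj x y ∧ (φ s(x, y) = b ∨ φ s(x, y) = c)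
  symm := ⟨fun _ _ h => ⟨h.1.symm, by rw [Sym2.eq_swap]; exact h.2⟩⟩
  loopless := ⟨fun x h => H.loopless.irrefl x h.1⟩

@[simp]
lemma bicolored_adj {b c : Fin k} {x y : V} :
    (bicolored H φ b c).Adj x y ↔ H.Adj x y ∧ (φ s(x, y) = b ∨ φ s(x, y) = c) :=
  Iff.rfl

lemma mem_edgeSet_bicolored {b c : Fin k} {e : Sym2 V} :
    e ∈ (bicolored H φ b c).edgeSet ↔ e ∈ H.edgeSet ∧ (φ e = b ∨ φ e = c) := by
  induction e using Sym2.ind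
  exact bicolored_adj

lemma bicolored_comm (b c : Fin k) : bicolored H φ b c = bicolored H φ c b := by
  ext x y
  simp only [bicolored_adj, or_comm]

lemma bicolored_congr (h : ∀ e ∈ H.edgeSet, ψ e = φ e) (b c : Fin k) :
    bicolored H ψ b c = bicolored H φ b c := by
  ext x y
  simp only [bicolored_adj]
  exact and_congr_right fun hxy => by rw [h s(x, y) hxy]

lemma ProperEC.bicolored_adj_three (hφ : ProperEC H φ) {b c : Fin k} {x y₁ y₂ y₃ : V}
    (h₁ : (bicolored H φ b c).Adj x y₁) (h₂ : (bicolored H φ b c).Adj x y₂)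
    (h₃ : (bicolored H φ b c).Adj x y₃) : y₁ = y₂ ∨ y₁ = y₃ ∨ y₂ = y₃ := by
  have hinj := properEC_iff.mp hφ
  rcases h₁ with ⟨a₁, c₁ | c₁⟩ <;> rcases h₂ with ⟨a₂, c₂ | c₂⟩ <;> rcases h₃ with ⟨a₃, c₃ | c₃⟩
  all_goals first
    | exact .inl (hinj a₁ a₂ (c₁.trans c₂.symm))
    | exact .inr (.inl (hinj a₁ a₃ (c₁.trans c₃.symm)))
    | exact .inr (.inr (hinj a₂ a₃ (c₂.trans c₃.symm)))

lemma ProperEC.subsingleton_neighborSet_bicolored (hφ : ProperEC H φ) {b c : Fin k} {x : V}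
    (hc : c ∉ Cset H φ x) : ((bicolored H φ b c).neighborSet x).Subsingleton := by
  have color : ∀ {y}, (bicolored H φ b c).Adj x y → φ s(x, y) = b := fun {y} ⟨hy, hcol⟩ =>
    hcol.resolve_right fun h => hc ⟨y, hy, h⟩
  exact fun y hy y' hy' => hφ.eq_of_color_eq_s6 hy.1 hy'.1 ((color hy).trans (color hy').symm)

lemma ProperEC.color_eq_or_of_walk (hφ : ProperEC G φ) {r s : V} {K : G.Walk r s}
    (h2 : ¬ 2 < (K.edges.map φ).toFinset.card) {y z : V} (hyz : y ≠ z)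
    (hy : s(x, y) ∈ K.edges) (hz : s(x, z) ∈ K.edges) {e : Sym2 V} (he : e ∈ K.edges) :
    φ e = φ s(x, y) ∨ φ e = φ s(x, z) := by
  classical
  have hne : φ s(x, y) ≠ φ s(x, z) := fun h =>
    hyz (hφ.eq_of_color_eq_s6 (K.adj_of_mem_edges hy) (K.adj_of_mem_edges hz) h)
  have hsub : {φ s(x, y), φ s(x, z)} ⊆ (K.edges.map φ).toFinset := by
    simp only [Finset.insert_subset_iff, Finset.singleton_subset_iff, List.mem_toFinset,
      List.mem_map]
    exact ⟨⟨_, hy, rfl⟩, ⟨_, hz, rfl⟩⟩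
  have hall := Finset.eq_of_subset_of_card_le hsub (by rw [Finset.card_pair hne]; omega)
  have hmem : φ e ∈ (K.edges.map φ).toFinset := List.mem_toFinset.mpr (List.mem_map_of_mem he)
  simpa [← hall] using hmem

end Colorings

section Recoloring

variable {G : SimpleGraph V} {x : V} {φ : Sym2 V → Fin k}

theorem properEC_of_deleteIncidenceSet (hφ : ProperEC (G.deleteIncidenceSet x) φ)
    (hinj : ∀ ⦃y y'⦄, G.Adj x y → G.Adj x y' → φ s(x, y) = φ s(x, y') → y = y')
    (hnew : ∀ ⦃y⦄, G.Adj x y → φ s(x, y) ∉ Cset (G.deleteIncidenceSet x) φ y) :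
    ProperEC G φ := by
  have hnew' : ∀ ⦃a y⦄, G.Adj a x → G.Adj a y → y ≠ x → φ s(a, x) ≠ φ s(a, y) :=
    fun a y hax hay hyx h =>
      hnew hax.symm ⟨y, deleteIncidenceSet_adj.mpr ⟨hay, hax.ne, hyx⟩, by rw [← h, Sym2.eq_swap]⟩
  refine properEC_iff.mpr fun a y y' hy hy' h => ?_
  by_cases ha : a = x
  · subst ha
    exact hinj hy hy' h
  by_cases hyx : y = x <;> by_cases hy'x : y' = x
  · rw [hyx, hy'x]
  · subst hyx
    exact absurd h (hnew' hy hy' hy'x)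
  · subst hy'x
    exact absurd h.symm (hnew' hy' hy hyx)
  · exact hφ.eq_of_color_eq_s6 (deleteIncidenceSet_adj.mpr ⟨hy, ha, hyx⟩)
      (deleteIncidenceSet_adj.mpr ⟨hy', ha, hy'x⟩) h

theorem acyclicEC_of_deleteIncidenceSet (hφ : AcyclicEC (G.deleteIncidenceSet x) φ)
    (hinj : ∀ ⦃y y'⦄, G.Adj x y → G.Adj x y' → φ s(x, y) = φ s(x, y') → y = y')
    (hnew : ∀ ⦃y⦄, G.Adj x y → φ s(x, y) ∉ Cset (G.deleteIncidenceSet x) φ y)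
    (hpath : ∀ ⦃y z⦄, G.Adj x y → G.Adj x z → y ≠ z →
      ¬ (bicolored (G.deleteIncidenceSet x) φ (φ s(x, y)) (φ s(x, z))).Reachable y z) :
    AcyclicEC G φ := by
  have hproper := properEC_of_deleteIncidenceSet hφ.1 hinj hnew
  refine ⟨hproper, fun r K hK => ?_⟩
  by_contra h2
  by_cases hx : x ∈ K.support
  · obtain ⟨y, z, R, hyz, hy, hz, hxR, hRK⟩ := hK.exists_walk_avoiding hx
    refine hpath (K.adj_of_mem_edges hy) (K.adj_of_mem_edges hz) hyz ⟨R.transfer _ fun e he => ?_⟩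
    exact mem_edgeSet_bicolored.mpr ⟨mem_edgeSet_deleteIncidenceSet_of_notMem_support hxR he,
      hproper.color_eq_or_of_walk h2 hyz hy hz (hRK e he)⟩
  · have hKH : ∀ e ∈ K.edges, e ∈ (G.deleteIncidenceSet x).edgeSet :=
      fun e he => mem_edgeSet_deleteIncidenceSet_of_notMem_support hx he
    have := hφ.2 r (K.transfer _ hKH) (hK.transfer hKH)
    rw [Walk.edges_transfer] at this
    exact h2 this

def recolorAt [DecidableEq V] (φ : Sym2 V → Fin k) (x : V) (σ : Equiv.Perm V) :
    Sym2 V → Fin k :=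
  fun e => if x ∈ e then φ (e.map σ) else φ e

variable [DecidableEq V] {σ : Equiv.Perm V}

lemma recolorAt_of_notMem {e : Sym2 V} (he : x ∉ e) : recolorAt φ x σ e = φ e := if_neg he

lemma recolorAt_mk (hσ : σ x = x) (y : V) : recolorAt φ x σ s(x, y) = φ s(x, σ y) := by
  simp [recolorAt, hσ]

theorem acyclicEC_recolorAt (hφ : AcyclicEC G φ) (hσx : σ x = x)
    (hσ : ∀ ⦃y⦄, G.Adj x y → G.Adj x (σ y))
    (hnew : ∀ ⦃y z⦄, G.Adj x y → G.Adj x z → φ s(x, z) ∉ Cset (G.deleteIncidenceSet x) φ y) :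
    AcyclicEC G (recolorAt φ x σ) := by
  have hoff : ∀ e ∈ (G.deleteIncidenceSet x).edgeSet, recolorAt φ x σ e = φ e :=
    fun e he => recolorAt_of_notMem (notMem_of_mem_edgeSet_deleteIncidenceSet he)
  refine acyclicEC_of_deleteIncidenceSet (hφ.of_le (deleteIncidenceSet_le G x) hoff) ?_ ?_ ?_
  · intro y y' hy hy' h
    rw [recolorAt_mk hσx, recolorAt_mk hσx] at h
    exact σ.injective (hφ.1.eq_of_color_eq_s6 (hσ hy) (hσ hy') h)
  · intro y hy
    rw [recolorAt_mk hσx, cset_congr hoff]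
    exact hnew hy (hσ hy)
  · intro y z hy hz hyz hreach
    rw [bicolored_congr hoff, recolorAt_mk hσx, recolorAt_mk hσx] at hreach
    obtain ⟨p⟩ := hreach
    obtain ⟨hadj, hcol | hcol⟩ := p.adj_snd (Walk.not_nil_of_ne hyz)
    · exact hnew hy (hσ hy) ⟨_, hadj, hcol⟩
    · exact hnew hy (hσ hz) ⟨_, hadj, hcol⟩

end Recoloring

section CriticalPaths

variable {H : SimpleGraph V} {φ ψ : Sym2 V → Fin k} {u w : V}

/-- What blocks coloring `vu` with `c` and `vw` with `b`, for a vertex `v` whose only neighbors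
are `u` and `w`: a `(b, c)`-colored path from `u` to `w`. -/
def HasCriticalPaths (H : SimpleGraph V) (φ : Sym2 V → Fin k) (u w : V) : Prop :=
  ∀ b c, b ≠ c → b ∉ Cset H φ w → c ∉ Cset H φ u → (bicolored H φ b c).Reachable u w

theorem hasAEC_of_not_hasCriticalPaths {G : SimpleGraph V} {v : V} (huw : u ≠ w)
    (hv : G.neighborSet v = {u, w}) (hφ : AcyclicEC (G.deleteIncidenceSet v) φ)
    (hcrit : ¬ HasCriticalPaths (G.deleteIncidenceSet v) φ u w) : HasAEC G k := by
  classical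
  simp only [HasCriticalPaths, not_forall] at hcrit
  obtain ⟨b, c, hbc, hbw, hcu, hpath⟩ := hcrit
  have hnbr : ∀ ⦃y⦄, G.Adj v y → y = u ∨ y = w := fun y hy => by
    rwa [← mem_neighborSet, hv, Set.mem_insert_iff, Set.mem_singleton_iff] at hy
  have hne : s(v, u) ≠ s(v, w) := fun h => huw (Sym2.congr_right.mp h)
  set ψ := Function.update (Function.update φ s(v, u) c) s(v, w) b
  have hψu : ψ s(v, u) = c := by simp [ψ, hne]
  have hψw : ψ s(v, w) = b := by simp [ψ]
  have hoff : ∀ e ∈ (G.deleteIncidenceSet v).edgeSet, ψ e = φ e := fun e he => by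
    have hve := notMem_of_mem_edgeSet_deleteIncidenceSet he
    have hu : e ≠ s(v, u) := by rintro rfl; simp at hve
    have hw : e ≠ s(v, w) := by rintro rfl; simp at hve
    simp [ψ, hu, hw]
  refine ⟨ψ, acyclicEC_of_deleteIncidenceSet (hφ.of_le le_rfl hoff) ?_ ?_ ?_⟩
  · intro y y' hy hy' h
    rcases hnbr hy with rfl | rfl <;> rcases hnbr hy' with rfl | rfl <;> simp_all
  · intro y hy
    rw [cset_congr hoff]
    rcases hnbr hy with rfl | rfl
    · rwa [hψu]
    · rwa [hψw]
  · intro y z hy hz hyz hreach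
    rw [bicolored_congr hoff] at hreach
    rcases hnbr hy with rfl | rfl <;> rcases hnbr hz with rfl | rfl
    · exact hyz rfl
    · rw [hψu, hψw, bicolored_comm] at hreach
      exact hpath hreach
    · rw [hψu, hψw] at hreach
      exact hpath hreach.symm
    · exact hyz rfl

theorem HasCriticalPaths.cset_union_eq_univ (hcrit : HasCriticalPaths H φ u w) (huw : u ≠ w)
    (hk : (Cset H φ u).ncard + 2 ≤ k) : Cset H φ u ∪ Cset H φ w = Set.univ := by
  by_contra hne
  obtain ⟨b, hb⟩ := (Set.ne_univ_iff_exists_notMem _).mp hne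
  rw [Set.mem_union, not_or] at hb
  obtain ⟨c, hc⟩ : ∃ c, c ∉ insert b (Cset H φ u) := by
    by_contra! hall
    have := Set.ncard_le_ncard (fun c _ => hall c : Set.univ ⊆ insert b (Cset H φ u))
    rw [Set.ncard_univ, Nat.card_fin] at this
    linarith [Set.ncard_insert_le b (Cset H φ u)]
  rw [Set.mem_insert_iff, not_or] at hc
  obtain ⟨p⟩ := hcrit b c (Ne.symm hc.1) hb.2 hc.2
  obtain ⟨hadj, hcol | hcol⟩ := p.adj_snd (Walk.not_nil_of_ne huw)
  · exact hb.1 ⟨_, hadj, hcol⟩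
  · exact hc.2 ⟨_, hadj, hcol⟩

theorem HasCriticalPaths.insert_subset_cset (hcrit : HasCriticalPaths H φ u w)
    (hφ : ProperEC H φ) (hdisj : Disjoint (Cset H φ u) (Cset H φ w)) {y : V} (hy : H.Adj u y) :
    insert (φ s(u, y)) (Cset H φ w) ⊆ Cset H φ y := by
  have hyu : φ s(y, u) = φ s(u, y) := by rw [Sym2.eq_swap]
  have hβw : φ s(u, y) ∉ Cset H φ w := Set.disjoint_left.mp hdisj ⟨y, hy, rfl⟩
  rintro t (rfl | ht)
  · exact ⟨u, hy.symm, hyu⟩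
  have htu : t ∉ Cset H φ u := Set.disjoint_right.mp hdisj ht
  obtain ⟨p, hp⟩ := (hcrit _ t (fun h => hβw (by rwa [h])) hβw htu).exists_isPath
  cases p with
  | nil => exact absurd ⟨y, hy, rfl⟩ hβw
  | @cons _ y₁ _ h₁ q =>
    obtain rfl : y₁ = y :=
      hφ.eq_of_color_eq_s6 h₁.1 hy (h₁.2.resolve_right fun h => htu ⟨_, h₁.1, h⟩)
    cases q with
    | nil => exact absurd ⟨u, hy.symm, hyu⟩ hβw
    | @cons _ y₂ _ h₂ q =>
      rw [Walk.cons_isPath_iff, Walk.support_cons, List.mem_cons, not_or] at hp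
      have hy₂ : y₂ ≠ u := fun h => hp.2.2 (h ▸ q.start_mem_support)
      exact ⟨y₂, h₂.1, h₂.2.resolve_left fun h =>
        hy₂ (hφ.eq_of_color_eq_s6 h₂.1 hy.symm (h.trans hyu.symm))⟩

theorem HasCriticalPaths.cset_deleteIncidenceSet_subset (hcrit : HasCriticalPaths H φ u w)
    (hφ : ProperEC H φ) (hdisj : Disjoint (Cset H φ u) (Cset H φ w)) {y : V} (hy : H.Adj u y)
    (hdeg : (H.neighborSet y).ncard ≤ (Cset H φ w).ncard + 1) :
    Cset (H.deleteIncidenceSet u) φ y ⊆ Cset H φ w := by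
  have hβw : φ s(u, y) ∉ Cset H φ w := Set.disjoint_left.mp hdisj ⟨y, hy, rfl⟩
  have heq := Set.eq_of_subset_of_ncard_le (hcrit.insert_subset_cset hφ hdisj hy)
    (by rwa [hφ.ncard_cset, Set.ncard_insert_of_notMem hβw])
  rintro t ⟨z, hz, rfl⟩
  rw [deleteIncidenceSet_adj] at hz
  have hmem : φ s(y, z) ∈ insert (φ s(u, y)) (Cset H φ w) := heq ▸ ⟨z, hz.1, rfl⟩
  refine hmem.resolve_left fun h => hz.2.2 (hφ.eq_of_color_eq_s6 hz.1 hy.symm ?_)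
  rw [h, Sym2.eq_swap]

lemma exists_adj_reachable_of_reachable_bicolored (h : ∀ e ∈ H.edgeSet, u ∉ e → ψ e = φ e)
    {b c : Fin k} (hreach : (bicolored H ψ b c).Reachable u w) (huw : u ≠ w) :
    ∃ y, (bicolored H ψ b c).Adj u y ∧ (bicolored H φ b c).Reachable y w := by
  obtain ⟨p, hp⟩ := hreach.exists_isPath
  cases p with
  | nil => exact absurd rfl huw
  | cons hadj q =>
    rw [Walk.cons_isPath_iff] at hp
    refine ⟨_, hadj, ⟨q.transfer _ fun e he => ?_⟩⟩
    have heH := mem_edgeSet_bicolored.mp (q.edges_subset_edgeSet he)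
    rw [h e heH.1 (notMem_of_mem_edges_of_notMem_support hp.2 he)] at heH
    exact mem_edgeSet_bicolored.mpr heH

/-- The `(b, c)`-component of `w` is a path ending at `u`, so it contains no other vertex missing
`b`. -/
theorem HasCriticalPaths.not_reachable (hcrit : HasCriticalPaths H φ u w) (hφ : ProperEC H φ)
    (huw : u ≠ w) (hdisj : Disjoint (Cset H φ u) (Cset H φ w))
    (hnbr : ∀ ⦃y⦄, H.Adj u y → Cset (H.deleteIncidenceSet u) φ y ⊆ Cset H φ w)
    {y : V} (hy : H.Adj u y) {b c : Fin k} (hb : b ∈ Cset H φ u) (hby : b ≠ φ s(u, y))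
    (hc : c ∈ Cset H φ w) : ¬ (bicolored H φ b c).Reachable y w := by
  intro hyw
  have hbw : b ∉ Cset H φ w := Set.disjoint_left.mp hdisj hb
  have hcu : c ∉ Cset H φ u := Set.disjoint_right.mp hdisj hc
  have hwy : w ≠ y := by
    rintro rfl
    exact Set.disjoint_left.mp hdisj ⟨w, hy, rfl⟩ ⟨u, hy.symm, by rw [Sym2.eq_swap]⟩
  have hby' : b ∉ Cset H φ y := by
    rintro ⟨z, hz, rfl⟩
    by_cases hzu : z = u
    · subst hzu
      exact hby (by rw [Sym2.eq_swap])
    · exact hbw (hnbr hy ⟨z, deleteIncidenceSet_adj.mpr ⟨hz, hy.ne', hzu⟩, rfl⟩)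
  have hsub : ∀ ⦃x⦄, b ∉ Cset H φ x → ((bicolored H φ b c).neighborSet x).Subsingleton :=
    fun x hx => bicolored_comm (φ := φ) b c ▸ hφ.subsingleton_neighborSet_bicolored hx
  rcases eq_or_eq_or_eq_of_reachable (fun _ _ _ _ => hφ.bicolored_adj_three)
    (hsub hbw) (hφ.subsingleton_neighborSet_bicolored hcu) (hsub hby')
    (hcrit b c (fun h => hcu (by rwa [← h])) hbw hcu).symm hyw.symm with h | h | h
  · exact huw h.symm
  · exact hwy h
  · exact hy.ne h

theorem HasCriticalPaths.exists_acyclicEC_not_hasCriticalPaths [DecidableEq V]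
    (hcrit : HasCriticalPaths H φ u w) (hφ : AcyclicEC H φ) (huw : u ≠ w)
    (hdisj : Disjoint (Cset H φ u) (Cset H φ w))
    (hnbr : ∀ ⦃y⦄, H.Adj u y → Cset (H.deleteIncidenceSet u) φ y ⊆ Cset H φ w)
    (hu : 1 < (Cset H φ u).ncard) (hw : (Cset H φ w).Nonempty) :
    ∃ ψ : Sym2 V → Fin k, AcyclicEC H ψ ∧ ¬ HasCriticalPaths H ψ u w := by
  obtain ⟨_, _, ⟨y, hy, rfl⟩, ⟨y', hy', rfl⟩, hyy'⟩ := (Set.one_lt_ncard_iff (Set.toFinite _)).mp hu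
  obtain ⟨c, hc⟩ := hw
  have hcu : c ∉ Cset H φ u := Set.disjoint_right.mp hdisj hc
  set σ := Equiv.swap y y'
  have hσu : σ u = u := Equiv.swap_apply_of_ne_of_ne hy.ne hy'.ne
  have hσ : ∀ ⦃z⦄, H.Adj u z → H.Adj u (σ z) := fun z hz => by
    simp only [σ, Equiv.swap_apply_def]
    split_ifs <;> assumption
  refine ⟨recolorAt φ u σ, acyclicEC_recolorAt hφ hσu hσ fun z z' hz hz' h =>
    Set.disjoint_left.mp hdisj ⟨z', hz', rfl⟩ (hnbr hz h), fun hcrit' => ?_⟩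
  have hoff : ∀ e ∈ H.edgeSet, u ∉ e → recolorAt φ u σ e = φ e := fun _ _ => recolorAt_of_notMem
  have hcsetw : Cset H (recolorAt φ u σ) w = Cset H φ w := by
    refine Set.ext fun t => exists_congr fun z => and_congr_right fun hz => ?_
    have hu : u ∉ s(w, z) := by
      intro hu
      rcases Sym2.mem_iff.mp hu with rfl | rfl
      · exact huw rfl
      · exact Set.disjoint_left.mp hdisj ⟨w, hz.symm, rfl⟩ ⟨u, hz, by rw [Sym2.eq_swap]⟩
    rw [hoff _ hz hu]
  have hbw : φ s(u, y) ∉ Cset H (recolorAt φ u σ) w :=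
    hcsetw ▸ Set.disjoint_left.mp hdisj ⟨y, hy, rfl⟩
  have hcu' : c ∉ Cset H (recolorAt φ u σ) u := by
    rintro ⟨z, hz, hcol⟩
    rw [recolorAt_mk hσu] at hcol
    exact hcu ⟨_, hσ hz, hcol⟩
  obtain ⟨z, ⟨hz, hcol⟩, hzw⟩ := exists_adj_reachable_of_reachable_bicolored hoff
    (hcrit' _ c (fun h => hcu (by rw [← h]; exact ⟨y, hy, rfl⟩)) hbw hcu') huw
  rw [recolorAt_mk hσu] at hcol
  have hσz : σ z = y := hφ.1.eq_of_color_eq_s6 (hσ hz) hy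
    (hcol.resolve_right fun h => hcu ⟨_, hσ hz, h⟩)
  obtain rfl : z = y' := by rw [← σ.injective.eq_iff, hσz, Equiv.swap_apply_right]
  exact hcrit.not_reachable hφ.1 huw hdisj hnbr hz ⟨y, hy, rfl⟩ hyy' hc hzw

theorem exists_acyclicEC_not_hasCriticalPaths {D : ℕ} (hφ : AcyclicEC H φ) (huw : u ≠ w)
    (hD : ∀ x, (H.neighborSet x).ncard ≤ D) (hu : (H.neighborSet u).ncard < D)
    (hw : (H.neighborSet w).ncard < D) (hDk : D < k) (hsum : (H.neighborSet u).ncard + D ≤ k + 1) :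
    ∃ ψ : Sym2 V → Fin k, AcyclicEC H ψ ∧ ¬ HasCriticalPaths H ψ u w := by
  classical
  by_cases hcrit : HasCriticalPaths H φ u w
  swap
  · exact ⟨φ, hφ, hcrit⟩
  have hCu := hφ.1.ncard_cset u
  have hCw := hφ.1.ncard_cset w
  have hunion := hcrit.cset_union_eq_univ huw (by omega)
  have hk : k ≤ (Cset H φ u).ncard + (Cset H φ w).ncard := by
    have := Set.ncard_union_le (Cset H φ u) (Cset H φ w)
    rwa [hunion, Set.ncard_univ, Nat.card_fin] at this
  have hdisj : Disjoint (Cset H φ u) (Cset H φ w) := by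
    have := Set.ncard_inter_add_ncard_union (Cset H φ u) (Cset H φ w)
    rw [hunion, Set.ncard_univ, Nat.card_fin] at this
    rw [Set.disjoint_iff_inter_eq_empty, ← Set.ncard_eq_zero]
    omega
  exact hcrit.exists_acyclicEC_not_hasCriticalPaths hφ huw hdisj
    (fun y hy => hcrit.cset_deleteIncidenceSet_subset hφ.1 hdisj hy (by have := hD y; omega))
    (by omega) (Set.nonempty_of_ncard_ne_zero (by omega))

end CriticalPaths

/-- In an acyclically edge `k`-critical graph with `k > Δ(G)`, every neighbor of a
vertex of degree 2 has degree at least `k - Δ(G) + 3`. -/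
theorem critical_neighbors_of_twoVertex
    {V : Type u} [Fintype V] (G : SimpleGraph V) [DecidableRel G.Adj] (k : ℕ)
    (hG : AcyclicallyEdgeCritical G k) (hk : G.maxDegree < k)
    (v : V) (hv : G.degree v = 2) :
    ∀ u, G.Adj v u → k - G.maxDegree + 3 ≤ G.degree u := by
  intro u hvu
  by_contra! hdeg
  obtain ⟨w, hwu, hnbr⟩ := exists_neighborSet_eq_pair hv hvu
  have hvw : G.Adj v w := by simp [← mem_neighborSet, hnbr]
  have hdu := ncard_neighborSet_deleteIncidenceSet_add_one hvu
  have hdw := ncard_neighborSet_deleteIncidenceSet_add_one hvw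
  have hle : ∀ x, ((G.deleteIncidenceSet v).neighborSet x).ncard ≤ G.maxDegree := fun x =>
    (ncard_neighborSet_deleteIncidenceSet_le v x).trans (G.degree_le_maxDegree x)
  obtain ⟨φ, hφ⟩ := hG.2 _ (G.deleteIncidenceSet_le v) (deleteIncidenceSet_ne hvu)
  obtain ⟨ψ, hψ, hcrit⟩ := exists_acyclicEC_not_hasCriticalPaths hφ hwu.symm hle
    (by have := G.degree_le_maxDegree u; omega) (by have := G.degree_le_maxDegree w; omega) hk
    (by omega)
  exact hG.1 (hasAEC_of_not_hasCriticalPaths hwu.symm hnbr hψ hcrit)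
end
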